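/- arXiv:2509.24000 — 6 statements merged into one kernel-verified Lean document; each statement's English description precedes it below -/
import Mathlib

section
/- Let t be a positive integer and λ = {λ_1,...,λ_l} a partition of t. Then the monomial symmetric polynomial m_λ(p) in variables p_1,...,p_m can be written as (-1)^{l-1}(l-1)! · s_t(p) plus a polynomial in the power sums s_1(p),...,s_{t-1}(p), where s_u(p) = Σ_i p_i^u. -/
/-!
Multiplying `m_ν`, for `ν = (λ₂, …, λ_l)`, by `s_{λ₁}` and splitting the new index according
to whether it differs from all the others or equals the `j`-th one gives
`m_ν · s_{λ₁} = m_λ + Σ_j m_{ν + λ₁ e_j}`, where each `ν + λ₁ e_j` is a partition of `t`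
into `l - 1` parts. By induction on `l`, each of those is `(-1)^(l-2) (l-2)! s_t` modulo
polynomials in `s_1, …, s_{t-1}`, while `m_ν · s_{λ₁}` is such a polynomial outright since
`|ν|, λ₁ < t`. The `l - 1` copies of `s_t` give the coefficient
`-(l-1) · (-1)^(l-2) (l-2)! = (-1)^(l-1) (l-1)!`.
-/

namespace PowerSumExpansion

open Finset Nat

variable {R ι : Type*} [CommRing R] [Fintype ι]

variable (R ι) in
def powerSum (u : ℕ) : (ι → R) → R := fun p => ∑ i, p i ^ u

variable (R ι) in
def powerSumsBelow (t : ℕ) : Subalgebra R ((ι → R) → R) :=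
  Algebra.adjoin R (Set.range fun u : Fin (t - 1) => powerSum R ι (u + 1))

theorem powerSum_zero : powerSum R ι 0 = (Fintype.card ι : (ι → R) → R) := by
  ext p; simp [powerSum]

theorem powerSumsBelow_mono {s t : ℕ} (h : s ≤ t) :
    powerSumsBelow R ι s ≤ powerSumsBelow R ι t :=
  Algebra.adjoin_mono <| Set.range_subset_iff.2 fun u => ⟨Fin.castLE (by omega) u, rfl⟩

theorem mem_powerSumsBelow_iff {t : ℕ} {F : (ι → R) → R} :
    F ∈ powerSumsBelow R ι t ↔ ∃ g : MvPolynomial (Fin (t - 1)) R,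
      ∀ p, F p = MvPolynomial.eval (fun u : Fin (t - 1) => ∑ i, p i ^ ((u : ℕ) + 1)) g := by
  rw [powerSumsBelow, Algebra.adjoin_range_eq_range_aeval]
  refine exists_congr fun g => funext_iff.trans <| forall_congr' fun p => ?_
  rw [← MvPolynomial.coe_aeval_eq_eval]
  exact (Eq.congr_left (MvPolynomial.comp_aeval_apply _ (Pi.evalAlgHom R (fun _ => R) p) g)).trans
    eq_comm

theorem powerSum_mem_powerSumsBelow {u t : ℕ} (h : u < t) :
    powerSum R ι u ∈ powerSumsBelow R ι t := by
  rcases u with _ | u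
  · rw [powerSum_zero]
    exact natCast_mem _ _
  · exact Algebra.subset_adjoin ⟨⟨u, by omega⟩, rfl⟩

variable (R ι) in
noncomputable def monomialSymm {l : ℕ} (μ : Fin l → ℕ) : (ι → R) → R :=
  fun p => ∑ f : Fin l ↪ ι, ∏ r, p (f r) ^ μ r

theorem monomialSymm_zero (μ : Fin 0 → ℕ) : monomialSymm R ι μ = 1 := by
  ext p; simp [monomialSymm]

theorem monomialSymm_mul_powerSum {l : ℕ} (μ : Fin l → ℕ) (a : ℕ) :
    monomialSymm R ι μ * powerSum R ι a =
      monomialSymm R ι (Fin.cons a μ) + ∑ j, monomialSymm R ι (μ + Pi.single j a) := by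
  classical
  ext p
  have hfresh : monomialSymm R ι (Fin.cons a μ) p =
      ∑ f : Fin l ↪ ι, ∑ i : {i // i ∉ Set.range f}, (∏ r, p (f r) ^ μ r) * p i ^ a := by
    rw [monomialSymm, ← (Equiv.embeddingFinSucc l ι).symm.sum_comp, Fintype.sum_sigma]
    simp [Fin.prod_univ_succ, mul_comm]
  have hrange (f : Fin l ↪ ι) : ∑ i : {i // i ∈ Set.range f}, (∏ r, p (f r) ^ μ r) * p i ^ a =
      ∑ j, ∏ r, p (f r) ^ (μ + Pi.single j a : Fin l → ℕ) r := by
    rw [← (Equiv.ofInjective f f.injective).sum_comp]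
    refine sum_congr rfl fun j _ => ?_
    simp only [Pi.add_apply, pow_add, prod_mul_distrib, Pi.single_apply, pow_ite, pow_zero,
      prod_ite_eq', mem_univ, if_true, Equiv.ofInjective_apply]
  rw [Pi.add_apply, hfresh, Finset.sum_apply]
  simp only [Pi.mul_apply, monomialSymm, powerSum, sum_mul_sum]
  rw [sum_comm (γ := Fin l), ← sum_add_distrib]
  refine sum_congr rfl fun f _ => ?_
  rw [← hrange, add_comm]
  convert (Fintype.sum_subtype_add_sum_subtype (· ∈ Set.range f)
    fun i => (∏ r, p (f r) ^ μ r) * p i ^ a).symm using 4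

theorem monomialSymm_cons_sub_mem_powerSumsBelow {l : ℕ} (a : ℕ) (ν : Fin (l + 1) → ℕ)
    (ha : 0 < a) (hν : ∀ r, 0 < ν r)
    (ih : ∀ κ : Fin (l + 1) → ℕ, (∀ r, 0 < κ r) →
      monomialSymm R ι κ - ((-1) ^ l * l ! : R) • powerSum R ι (∑ r, κ r) ∈
        powerSumsBelow R ι (∑ r, κ r)) :
    monomialSymm R ι (Fin.cons a ν) -
        ((-1) ^ (l + 1) * (l + 1)! : R) • powerSum R ι (a + ∑ r, ν r) ∈
      powerSumsBelow R ι (a + ∑ r, ν r) := by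
  set t := a + ∑ r, ν r
  have hν_pos : 0 < ∑ r, ν r :=
    (hν 0).trans_le (single_le_sum (fun r _ => (hν r).le) (mem_univ 0))
  have hν_mem : monomialSymm R ι ν ∈ powerSumsBelow R ι t := by
    have hs : powerSum R ι (∑ r, ν r) ∈ powerSumsBelow R ι t :=
      powerSum_mem_powerSumsBelow (by omega)
    simpa using add_mem (powerSumsBelow_mono (by omega) (ih ν hν))
      (Subalgebra.smul_mem _ hs ((-1) ^ l * l ! : R))
  have hprod : monomialSymm R ι ν * powerSum R ι a ∈ powerSumsBelow R ι t :=
    mul_mem hν_mem (powerSum_mem_powerSumsBelow (by omega))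
  have hmerged (j : Fin (l + 1)) : monomialSymm R ι (ν + Pi.single j a) -
      ((-1) ^ l * l ! : R) • powerSum R ι t ∈ powerSumsBelow R ι t := by
    have hsum : ∑ r, (ν + Pi.single j a : Fin (l + 1) → ℕ) r = t := by
      simp [sum_add_distrib, t, add_comm]
    have hpos (r : Fin (l + 1)) : 0 < (ν + Pi.single j a : Fin (l + 1) → ℕ) r :=
      (hν r).trans_le (by simp)
    simpa only [hsum] using ih _ hpos
  convert sub_mem hprod (sum_mem (t := univ) fun j _ => hmerged j) using 1
  rw [monomialSymm_mul_powerSum, sum_sub_distrib, sum_const, Finset.card_fin]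
  have hcoeff : ((-1) ^ (l + 1) * (l + 1)! : R) = -((l + 1 : ℕ) * ((-1) ^ l * l !)) := by
    push_cast [factorial_succ]; ring
  rw [hcoeff]
  module

theorem monomialSymm_sub_mem_powerSumsBelow {l : ℕ} (μ : Fin l → ℕ) (hμ : ∀ r, 0 < μ r) :
    monomialSymm R ι μ - ((-1) ^ (l - 1) * (l - 1)! : R) • powerSum R ι (∑ r, μ r) ∈
      powerSumsBelow R ι (∑ r, μ r) := by
  induction l with
  | zero =>
    rw [monomialSymm_zero, Fin.sum_univ_zero, powerSum_zero]
    exact sub_mem (one_mem _) (Subalgebra.smul_mem _ (natCast_mem _ _) _)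
  | succ l ih =>
    obtain ⟨a, ν, rfl⟩ : ∃ a ν, μ = Fin.cons a ν :=
      ⟨μ 0, Fin.tail μ, (Fin.cons_self_tail μ).symm⟩
    have hν : ∀ r, 0 < ν r := fun r => by simpa using hμ r.succ
    rw [Fin.sum_cons]
    rcases l with _ | l
    · have hsingle : monomialSymm R ι (Fin.cons a ν) = powerSum R ι a := by
        simpa [monomialSymm_zero] using (monomialSymm_mul_powerSum (R := R) (ι := ι) ν a).symm
      simp [hsingle]
    · simpa using monomialSymm_cons_sub_mem_powerSumsBelow a ν (by simpa using hμ 0) hν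
        fun κ hκ => by simpa using ih κ hκ

end PowerSumExpansion

theorem monomial_symmetric_in_power_sums_general (t l m : ℕ)
    (lam : Fin l → ℕ) (hlam : ∀ r, 0 < lam r) (hsum : ∑ r, lam r = t) :
    ∃ g : MvPolynomial (Fin (t - 1)) ℝ,
      ∀ p : Fin m → ℝ,
        (∑ f : Fin l ↪ Fin m, ∏ r, p (f r) ^ lam r)
          = (-1 : ℝ) ^ (l - 1) * (Nat.factorial (l - 1)) * (∑ i, p i ^ t) +
            MvPolynomial.eval (fun u : Fin (t - 1) => ∑ i, p i ^ ((u : ℕ) + 1)) g := by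
  subst hsum
  obtain ⟨g, hg⟩ := PowerSumExpansion.mem_powerSumsBelow_iff.1 <|
    PowerSumExpansion.monomialSymm_sub_mem_powerSumsBelow (R := ℝ) (ι := Fin m) lam hlam
  exact ⟨g, fun p => sub_eq_iff_eq_add'.1 (hg p)⟩

/-- Let `λ = (λ₁,…,λ_l)` be a partition of `t > 0`. Then the monomial
symmetric polynomial `m_λ(p) = Σ_{i₁,…,i_l distinct} p_{i₁}^{λ₁} ⋯ p_{i_l}^{λ_l}` equals
`(−1)^{l−1} (l−1)! · s_t(p)` plus a polynomial in the power sums `s_1(p),…,s_{t−1}(p)`,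
where `s_u(p) = Σ_i p_i ^ u`. -/
theorem monomial_symmetric_in_power_sums (t l m : ℕ) (ht : 0 < t)
    (lam : Fin l → ℕ) (hlam : ∀ r, 0 < lam r) (hsum : ∑ r, lam r = t) :
    ∃ g : MvPolynomial (Fin (t - 1)) ℝ,
      ∀ p : Fin m → ℝ,
        (∑ f : Fin l ↪ Fin m, ∏ r, p (f r) ^ lam r)
          = (-1 : ℝ) ^ (l - 1) * (Nat.factorial (l - 1)) * (∑ i, p i ^ t) +
            MvPolynomial.eval (fun u : Fin (t - 1) => ∑ i, p i ^ ((u : ℕ) + 1)) g :=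
  monomial_symmetric_in_power_sums_general t l m lam hlam hsum
end

section
/- For every positive integer k there exist two probability distributions (p_1,...,p_{k+1}) and (q_1,...,q_{k+1}) such that Σ_r p_r^i = Σ_r q_r^i for all 0 ≤ i ≤ k, while Σ_r p_r^{k+1} − Σ_r q_r^{k+1} = 2 / (2^k (k+1)^k). -/
open Complex Finset

namespace ExistsEqMomentsAux

/-- primitive `n`-th root of unity -/
noncomputable def ζ (n : ℕ) : ℂ := Complex.exp (2 * Real.pi * Complex.I / n)

/-- square root of `ζ n` -/
noncomputable def η (n : ℕ) : ℂ := Complex.exp (Real.pi * Complex.I / n)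

lemma zeta_ne_zero (n : ℕ) : ζ n ≠ 0 := Complex.exp_ne_zero _

lemma eta_ne_zero (n : ℕ) : η n ≠ 0 := Complex.exp_ne_zero _

lemma zeta_zpow (n : ℕ) (d : ℤ) :
    ζ n ^ d = Complex.exp (d * (2 * Real.pi * Complex.I / n)) :=
  (Complex.exp_int_mul _ d).symm

lemma zeta_zpow_eq_one_iff {n : ℕ} (hn : 0 < n) (d : ℤ) :
    ζ n ^ d = 1 ↔ (n : ℤ) ∣ d := by
  have hn' : (n : ℂ) ≠ 0 := Nat.cast_ne_zero.2 hn.ne'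
  rw [zeta_zpow, Complex.exp_eq_one_iff]
  constructor
  · rintro ⟨m, hm⟩
    refine ⟨m, ?_⟩
    have hπ : (2 * (Real.pi : ℂ) * Complex.I) ≠ 0 := by
      simp [Real.pi_ne_zero, Complex.I_ne_zero]
    have : (d : ℂ) = n * m := by
      field_simp at hm
      have h2 : (d : ℂ) * (2 * (Real.pi:ℂ) * Complex.I) = ((n : ℂ) * m) * (2 * (Real.pi:ℂ) * Complex.I) := by
        linear_combination (2 * (Real.pi:ℂ) * Complex.I) * hm
      exact mul_right_cancel₀ hπ h2
    exact_mod_cast this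
  · rintro ⟨m, rfl⟩
    refine ⟨m, ?_⟩
    push_cast
    field_simp

lemma S_of_not_dvd {n : ℕ} (hn : 0 < n) {d : ℤ} (hd : ¬ (n : ℤ) ∣ d) :
    ∑ r ∈ range n, (ζ n ^ d) ^ r = 0 := by
  have hx : ζ n ^ d ≠ 1 := fun h => hd ((zeta_zpow_eq_one_iff hn d).1 h)
  rw [geom_sum_eq hx]
  have hpow : (ζ n ^ d) ^ n = 1 := by
    rw [← zpow_natCast (ζ n ^ d) n, ← zpow_mul, mul_comm, zpow_mul,
      (zeta_zpow_eq_one_iff hn n).2 ⟨1, by ring⟩, one_zpow]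
  rw [hpow, sub_self, zero_div]

lemma S_of_dvd {n : ℕ} (hn : 0 < n) {d : ℤ} (hd : (n : ℤ) ∣ d) :
    ∑ r ∈ range n, (ζ n ^ d) ^ r = n := by
  rw [(zeta_zpow_eq_one_iff hn d).2 hd]
  simp

/-- main expansion of the power sums -/
lemma key {n : ℕ} (hn : 0 < n) (w : ℂ) (hw : w ≠ 0) (i : ℕ) :
    ∑ r ∈ range n, ((1 + (w * ζ n ^ r + (w * ζ n ^ r)⁻¹) / 2) / n) ^ i
      = (∑ m ∈ range (2 * i + 1), ((2 * i).choose m : ℂ) * w ^ ((m : ℤ) - (i : ℤ))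
          * ∑ r ∈ range n, (ζ n ^ ((m : ℤ) - (i : ℤ))) ^ r) / (2 * (n : ℂ)) ^ i := by
  have hn' : (n : ℂ) ≠ 0 := Nat.cast_ne_zero.2 hn.ne'
  have hstep : ∀ r ∈ range n,
      ((1 + (w * ζ n ^ r + (w * ζ n ^ r)⁻¹) / 2) / n) ^ i
        = ∑ m ∈ range (2 * i + 1), ((2 * i).choose m : ℂ)
            * (w ^ ((m : ℤ) - (i : ℤ)) * (ζ n ^ ((m : ℤ) - (i : ℤ))) ^ r) / (2 * (n : ℂ)) ^ i := by
    intro r _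
    set z := w * ζ n ^ r with hz
    have hz0 : z ≠ 0 := mul_ne_zero hw (pow_ne_zero _ (zeta_ne_zero n))
    have h1 : (1 + (z + z⁻¹) / 2) / n = (z + 1) ^ 2 / (2 * n * z) := by
      field_simp
      ring
    have hzd : ∀ m : ℕ, z ^ ((m : ℤ) - (i : ℤ))
        = w ^ ((m : ℤ) - (i : ℤ)) * (ζ n ^ ((m : ℤ) - (i : ℤ))) ^ r := by
      intro m
      rw [hz, mul_zpow]
      congr 1
      rw [← zpow_natCast (ζ n) r, ← zpow_mul, mul_comm, zpow_mul, zpow_natCast]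
    rw [h1, div_pow, ← pow_mul, add_pow, sum_div]
    refine sum_congr rfl fun m hm => ?_
    rw [← hzd m, zpow_sub₀ hz0, zpow_natCast, zpow_natCast, one_pow, mul_one]
    have hzi : z ^ i ≠ 0 := pow_ne_zero _ hz0
    rw [mul_pow, mul_pow]
    field_simp
  rw [sum_congr rfl hstep, sum_comm, sum_div]
  refine sum_congr rfl fun m hm => ?_
  rw [← sum_div]
  congr 1
  rw [mul_sum]
  exact sum_congr rfl fun r _ => by ring

lemma eta_sq (n : ℕ) : η n ^ 2 = ζ n := by
  rw [η, ζ, ← Complex.exp_nat_mul]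
  norm_num
  ring_nf

lemma eta_pow_n {n : ℕ} (hn : 0 < n) : η n ^ (n : ℤ) = -1 := by
  have hn' : (n : ℂ) ≠ 0 := Nat.cast_ne_zero.2 hn.ne'
  rw [zpow_natCast, η, ← Complex.exp_nat_mul, ← Complex.exp_pi_mul_I]
  congr 1
  field_simp

end ExistsEqMomentsAux

open ExistsEqMomentsAux in
/-- For every positive integer `k` there exist two probability distributions
`p, q` on `k+1` points whose moments agree up to degree `k`, while the `(k+1)`-th moments
differ by exactly `2 / (2^k (k+1)^k)`. -/
theorem exists_equal_moment_distributions (k : ℕ) (hk : 0 < k) :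
    ∃ p q : Fin (k + 1) → ℝ,
      (∀ r, 0 ≤ p r) ∧ (∀ r, 0 ≤ q r) ∧ (∑ r, p r = 1) ∧ (∑ r, q r = 1) ∧
      (∀ i ≤ k, ∑ r, p r ^ i = ∑ r, q r ^ i) ∧
      (∑ r, p r ^ (k + 1)) - (∑ r, q r ^ (k + 1))
        = 2 / (2 ^ k * (k + 1 : ℝ) ^ k) := by
  set n : ℕ := k + 1 with hn
  have hn0 : 0 < n := Nat.succ_pos k
  have hn2 : 2 ≤ n := by omega
  have hnR : (0:ℝ) < n := by exact_mod_cast hn0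
  have hnC : (n : ℂ) ≠ 0 := Nat.cast_ne_zero.2 hn0.ne'
  have hbridge : ∀ x : ℂ, Complex.cos x = (Complex.exp (x * Complex.I) + (Complex.exp (x * Complex.I))⁻¹) / 2 := by
    intro x
    rw [← Complex.exp_neg]
    have h := Complex.two_cos x
    rw [neg_mul] at h
    linear_combination h / 2
  have hexp_p : ∀ r : ℕ, (1:ℂ) * ζ n ^ r
      = Complex.exp ((2 * (Real.pi:ℂ) * r / n) * Complex.I) := by
    intro r
    rw [one_mul, ζ, ← Complex.exp_nat_mul]
    congr 1
    field_simp
  have hexp_q : ∀ r : ℕ, η n * ζ n ^ r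
      = Complex.exp (((2 * (r:ℂ) + 1) * Real.pi / n) * Complex.I) := by
    intro r
    rw [ζ, ← Complex.exp_nat_mul, η, ← Complex.exp_add]
    congr 1
    field_simp
    ring
  have hP : ∀ i : ℕ, ((∑ r : Fin n, ((1 + Real.cos (2 * Real.pi * (r : ℕ) / n)) / n) ^ i : ℝ) : ℂ)
      = (∑ m ∈ range (2 * i + 1), ((2 * i).choose m : ℂ) * (1:ℂ) ^ ((m : ℤ) - (i : ℤ))
          * ∑ r ∈ range n, (ζ n ^ ((m : ℤ) - (i : ℤ))) ^ r) / (2 * (n : ℂ)) ^ i := by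
    intro i
    rw [Fin.sum_univ_eq_sum_range (fun r : ℕ => ((1 + Real.cos (2 * Real.pi * r / n)) / n) ^ i) n,
      ← key hn0 1 one_ne_zero i]
    push_cast
    refine sum_congr rfl fun r _ => ?_
    have hkn : ((k:ℂ) + 1) = (n:ℂ) := by rw [hn]; push_cast; ring
    rw [hbridge, ← hexp_p r]
  have hQ : ∀ i : ℕ, ((∑ r : Fin n, ((1 + Real.cos ((2 * (r : ℕ) + 1) * Real.pi / n)) / n) ^ i : ℝ) : ℂ)
      = (∑ m ∈ range (2 * i + 1), ((2 * i).choose m : ℂ) * (η n) ^ ((m : ℤ) - (i : ℤ))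
          * ∑ r ∈ range n, (ζ n ^ ((m : ℤ) - (i : ℤ))) ^ r) / (2 * (n : ℂ)) ^ i := by
    intro i
    rw [Fin.sum_univ_eq_sum_range (fun r : ℕ => ((1 + Real.cos ((2 * r + 1) * Real.pi / n)) / n) ^ i) n,
      ← key hn0 (η n) (eta_ne_zero n) i]
    push_cast
    refine sum_congr rfl fun r _ => ?_
    have hkn : ((k:ℂ) + 1) = (n:ℂ) := by rw [hn]; push_cast; ring
    rw [hbridge, ← hexp_q r]
  have hnd : ∀ d : ℤ, d ≠ 0 → d.natAbs ≤ k → ¬ (n : ℤ) ∣ d := by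
    intro d hd0 hdk hdvd
    have h1 : (n : ℤ) ≤ |d| := Int.le_of_dvd (abs_pos.2 hd0) ((dvd_abs _ _).2 hdvd)
    rw [Int.abs_eq_natAbs] at h1
    omega
  refine ⟨fun r => (1 + Real.cos (2 * Real.pi * (r : ℕ) / n)) / n,
          fun r => (1 + Real.cos ((2 * (r : ℕ) + 1) * Real.pi / n)) / n, ?_, ?_, ?_, ?_, ?_, ?_⟩
  · intro r
    have h := Real.neg_one_le_cos (2 * Real.pi * (r : ℕ) / n)
    have : (0:ℝ) ≤ 1 + Real.cos (2 * Real.pi * (r : ℕ) / n) := by linarith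
    positivity
  · intro r
    have h := Real.neg_one_le_cos ((2 * (r : ℕ) + 1) * Real.pi / n)
    have : (0:ℝ) ≤ 1 + Real.cos ((2 * (r : ℕ) + 1) * Real.pi / n) := by linarith
    positivity
  · -- sum p = 1
    have h1 : ((∑ r : Fin n, ((1 + Real.cos (2 * Real.pi * (r : ℕ) / n)) / n) ^ 1 : ℝ) : ℂ) = 1 := by
      rw [hP 1]
      have h0 : ¬ (n:ℤ) ∣ (-1 : ℤ) := hnd _ (by norm_num) (by simp; omega)
      have h2 : ¬ (n:ℤ) ∣ (1 : ℤ) := hnd _ one_ne_zero (by simp; omega)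
      have hS0 : ∑ r ∈ range n, (ζ n ^ (0:ℤ)) ^ r = n := S_of_dvd hn0 (dvd_zero _)
      rw [show 2 * 1 + 1 = 3 from rfl, sum_range_succ, sum_range_succ, sum_range_one]
      norm_num
      have hA : ∑ x ∈ range n, (ζ n ^ x)⁻¹ = 0 := by
        simpa [zpow_neg, zpow_one, inv_pow] using S_of_not_dvd hn0 h0
      have hB : ∑ x ∈ range n, ζ n ^ x = 0 := by
        simpa using S_of_not_dvd hn0 h2
      rw [hA, hB]
      field_simp
      ring
    have h1' : ∑ r : Fin n, ((1 + Real.cos (2 * Real.pi * (r : ℕ) / n)) / n) ^ 1 = 1 := by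
      exact_mod_cast h1
    simpa using h1'
  · -- sum q = 1
    have h1 : ((∑ r : Fin n, ((1 + Real.cos ((2 * (r : ℕ) + 1) * Real.pi / n)) / n) ^ 1 : ℝ) : ℂ) = 1 := by
      rw [hQ 1]
      have h0 : ¬ (n:ℤ) ∣ (-1 : ℤ) := hnd _ (by norm_num) (by simp; omega)
      have h2 : ¬ (n:ℤ) ∣ (1 : ℤ) := hnd _ one_ne_zero (by simp; omega)
      have hS0 : ∑ r ∈ range n, (ζ n ^ (0:ℤ)) ^ r = n := S_of_dvd hn0 (dvd_zero _)
      rw [show 2 * 1 + 1 = 3 from rfl, sum_range_succ, sum_range_succ, sum_range_one]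
      norm_num
      have hA : ∑ x ∈ range n, (ζ n ^ x)⁻¹ = 0 := by
        simpa [zpow_neg, zpow_one, inv_pow] using S_of_not_dvd hn0 h0
      have hB : ∑ x ∈ range n, ζ n ^ x = 0 := by
        simpa using S_of_not_dvd hn0 h2
      rw [hA, hB]
      field_simp
      ring
    have h1' : ∑ r : Fin n, ((1 + Real.cos ((2 * (r : ℕ) + 1) * Real.pi / n)) / n) ^ 1 = 1 := by
      exact_mod_cast h1
    simpa using h1'
  · -- moments agree
    intro i hi
    have hC : ((∑ r : Fin n, ((1 + Real.cos (2 * Real.pi * (r : ℕ) / n)) / n) ^ i : ℝ) : ℂ)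
        = ((∑ r : Fin n, ((1 + Real.cos ((2 * (r : ℕ) + 1) * Real.pi / n)) / n) ^ i : ℝ) : ℂ) := by
      rw [hP i, hQ i]
      congr 1
      refine sum_congr rfl fun m hm => ?_
      rcases eq_or_ne m i with rfl | hmi
      · simp
      · have hd : ¬ (n:ℤ) ∣ ((m:ℤ) - (i:ℤ)) := by
          apply hnd
          · intro h; exact hmi (by omega)
          · simp only [mem_range] at hm; omega
        rw [S_of_not_dvd hn0 hd, mul_zero, mul_zero]
    exact_mod_cast hC
  · -- top moment difference
    have hdiff : ((∑ r : Fin n, ((1 + Real.cos (2 * Real.pi * (r : ℕ) / n)) / n) ^ n : ℝ) : ℂ)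
        - ((∑ r : Fin n, ((1 + Real.cos ((2 * (r : ℕ) + 1) * Real.pi / n)) / n) ^ n : ℝ) : ℂ)
        = 4 * n / (2 * (n : ℂ)) ^ n := by
      rw [hP n, hQ n, div_sub_div_same, ← sum_sub_distrib]
      have hpair : ({0, 2 * n} : Finset ℕ) ⊆ range (2 * n + 1) := by
        intro m hm
        simp only [mem_insert, mem_singleton] at hm
        rcases hm with rfl | rfl <;> simp [mem_range]
      rw [← sum_subset hpair ?_]
      · rw [sum_pair (show (0:ℕ) ≠ 2 * n by omega)]
        have hSn : ∑ r ∈ range n, (ζ n ^ ((n:ℤ))) ^ r = n := S_of_dvd hn0 ⟨1, by ring⟩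
        have hSmn : ∑ r ∈ range n, (ζ n ^ (-(n:ℤ))) ^ r = n := S_of_dvd hn0 ⟨-1, by ring⟩
        have he : η n ^ ((n:ℤ)) = -1 := eta_pow_n hn0
        have he' : η n ^ (-(n:ℤ)) = -1 := by rw [zpow_neg, he]; norm_num
        rw [show (((0:ℕ)):ℤ) - (n:ℤ) = -(n:ℤ) by push_cast; ring,
            show (((2*n:ℕ)):ℤ) - (n:ℤ) = (n:ℤ) by push_cast; ring]
        rw [hSn, hSmn, he, he', one_zpow, one_zpow, Nat.choose_zero_right, Nat.choose_self]
        push_cast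
        ring
      · intro m hm hm'
        simp only [mem_range] at hm
        simp only [mem_insert, mem_singleton] at hm'
        push_neg at hm'
        rcases eq_or_ne m n with rfl | hmn
        · simp
        · have hd : ¬ (n:ℤ) ∣ ((m:ℤ) - (n:ℤ)) := by
            intro hdvd
            rcases lt_trichotomy ((m:ℤ) - (n:ℤ)) 0 with hlt | heq | hgt
            · have hdvd' : (n:ℤ) ∣ ((n:ℤ) - (m:ℤ)) := by
                have := hdvd.neg_right
                simpa [neg_sub] using this
              have := Int.le_of_dvd (by omega) hdvd'
              omega
            · exact hmn (by omega)
            · have := Int.le_of_dvd (by omega) hdvd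
              omega
          rw [S_of_not_dvd hn0 hd, mul_zero, mul_zero, sub_zero]
    have h4 : 4 * (n:ℂ) / (2 * (n : ℂ)) ^ n = ((2 / (2 ^ k * ((k:ℝ) + 1) ^ k) : ℝ) : ℂ) := by
      have hk1 : ((k:ℂ) + 1) ≠ 0 := by
        have : ((k:ℂ) + 1) = (n : ℂ) := by rw [hn]; push_cast; ring
        rw [this]; exact hnC
      rw [hn]
      push_cast
      rw [mul_pow, pow_succ, pow_succ]
      field_simp
      ring
    have hfin := hdiff.trans h4
    exact_mod_cast hfin
end

section
/- For Stirling numbers of the second kind, Σ_{l=1}^k (l-1)! · S(k,l) ≤ k^{k-1}. -/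
/-!
Multiplying by `k`, the bound becomes `∑ k (l-1)! S(k,l) ≤ k^k`. Since `(l-1)! ≤ (k-1)^{↓(l-1)}`
for `l ≤ k`, each term is at most `S(k,l) k^{↓l}`, and `∑_l S(k,l) x^{↓l} = x^k` at `x = k`.
-/

/-- Stirling numbers of the second kind: `stirling2 k l` is the number of ways to partition a
set of `k` elements into `l` nonempty subsets. -/
def stirling2 : ℕ → ℕ → ℕ
  | 0, 0 => 1
  | 0, _ + 1 => 0
  | _ + 1, 0 => 0
  | k + 1, l + 1 => (l + 1) * stirling2 k (l + 1) + stirling2 k l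

theorem stirling2_eq_stirlingSecond : stirling2 = Nat.stirlingSecond := by
  funext k l
  induction k generalizing l with
  | zero => cases l <;> rfl
  | succ k ih => cases l <;> simp [stirling2, Nat.stirlingSecond, ih]

namespace Nat

theorem mul_descFactorial (x k : ℕ) :
    x * x.descFactorial k = x.descFactorial (k + 1) + k * x.descFactorial k := by
  rcases le_or_gt k x with hkx | hxk
  · rw [descFactorial_succ, ← Nat.add_mul, Nat.sub_add_cancel hkx]
  · simp [descFactorial_eq_zero_iff_lt.mpr hxk]

theorem sum_stirlingSecond_mul_descFactorial (n x : ℕ) :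
    ∑ k ∈ Finset.range (n + 1), stirlingSecond n k * x.descFactorial k = x ^ n := by
  induction n with
  | zero => simp
  | succ n ih =>
    have shift : ∑ k ∈ Finset.range (n + 1), k * stirlingSecond n k * x.descFactorial k =
        ∑ k ∈ Finset.range (n + 1),
          (k + 1) * stirlingSecond n (k + 1) * x.descFactorial (k + 1) := by
      rw [Finset.sum_range_succ', Finset.sum_range_succ _ n,
        stirlingSecond_eq_zero_of_lt n.lt_succ_self]
      simp
    symm
    calc x ^ (n + 1)
        = ∑ k ∈ Finset.range (n + 1), x * (stirlingSecond n k * x.descFactorial k) := by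
          rw [pow_succ', ← ih, Finset.mul_sum]
      _ = ∑ k ∈ Finset.range (n + 1), (stirlingSecond n k * x.descFactorial (k + 1) +
            k * stirlingSecond n k * x.descFactorial k) := by
          refine Finset.sum_congr rfl fun k _ => ?_
          rw [mul_left_comm, mul_descFactorial]
          ring
      _ = ∑ k ∈ Finset.range (n + 1),
            stirlingSecond (n + 1) (k + 1) * x.descFactorial (k + 1) := by
          rw [Finset.sum_add_distrib, shift, ← Finset.sum_add_distrib]
          refine Finset.sum_congr rfl fun k _ => ?_
          rw [stirlingSecond_succ_succ]
          ring
      _ = ∑ k ∈ Finset.range (n + 2), stirlingSecond (n + 1) k * x.descFactorial k := by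
          simp [Finset.sum_range_succ' _ (n + 1)]

theorem factorial_le_descFactorial {n k : ℕ} (h : k ≤ n) : k ! ≤ n.descFactorial k :=
  le_of_dvd (descFactorial_pos.mpr h) (factorial_dvd_descFactorial n k)

theorem succ_mul_factorial_le_descFactorial_succ {n k : ℕ} (h : k ≤ n) :
    (n + 1) * k ! ≤ (n + 1).descFactorial (k + 1) := by
  rw [succ_descFactorial_succ]
  exact Nat.mul_le_mul_left _ (factorial_le_descFactorial h)

end Nat

open Finset Nat in
theorem stirling2_factorial_sum_le_general (k : ℕ) :
    ∑ l ∈ Finset.Icc 1 k, Nat.factorial (l - 1) * stirling2 k l ≤ k ^ (k - 1) := by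
  rw [stirling2_eq_stirlingSecond]
  obtain _ | m := k
  · simp
  have term_le : ∀ l ∈ Icc 1 (m + 1),
      (m + 1) * ((l - 1)! * stirlingSecond (m + 1) l) ≤
        stirlingSecond (m + 1) l * (m + 1).descFactorial l := by
    intro l hl
    obtain ⟨hl1, hlm⟩ := mem_Icc.mp hl
    obtain ⟨j, rfl⟩ := Nat.exists_eq_add_of_le' hl1
    rw [Nat.add_sub_cancel, ← mul_assoc, mul_comm (stirlingSecond _ _)]
    exact Nat.mul_le_mul_right _ (succ_mul_factorial_le_descFactorial_succ (by omega))
  refine Nat.le_of_mul_le_mul_left ?_ m.succ_pos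
  calc (m + 1) * ∑ l ∈ Icc 1 (m + 1), (l - 1)! * stirlingSecond (m + 1) l
      ≤ ∑ l ∈ Icc 1 (m + 1), stirlingSecond (m + 1) l * (m + 1).descFactorial l := by
        rw [mul_sum]
        exact sum_le_sum term_le
    _ ≤ ∑ l ∈ range (m + 2), stirlingSecond (m + 1) l * (m + 1).descFactorial l :=
        sum_le_sum_of_subset fun l hl => by simp only [mem_Icc, mem_range] at hl ⊢; omega
    _ = (m + 1) * (m + 1) ^ (m + 1 - 1) := by
        rw [sum_stirlingSecond_mul_descFactorial, Nat.add_sub_cancel, pow_succ']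

/-- `∑_{l=1}^k (l−1)! S(k,l) ≤ k^{k−1}`. -/
theorem stirling2_factorial_sum_le (k : ℕ) (hk : 1 ≤ k) :
    ∑ l ∈ Finset.Icc 1 k, Nat.factorial (l - 1) * stirling2 k l ≤ k ^ (k - 1) :=
  stirling2_factorial_sum_le_general k
end

section
/- For positive integers d, T and nonnegative integers y_1,...,y_T, the ratio (Π_{t=1}^T d^{↑y_t}) / d^{↑(y_1+...+y_T)} is at least exp(−(Σ_t y_t)^2 / d). -/
open Finset

lemma ascFactorial_eq_prod_range' (d k : ℕ) :
    d.ascFactorial k = ∏ i ∈ Finset.range k, (d + i) := by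
  induction k with
  | zero => simp
  | succ n ih => rw [Nat.ascFactorial_succ, Finset.prod_range_succ, ih, mul_comm]

lemma ascFactorial_add' (d a b : ℕ) :
    d.ascFactorial (a + b) = d.ascFactorial a * (d + a).ascFactorial b := by
  induction b with
  | zero => simp
  | succ n ih =>
    rw [← Nat.add_assoc, Nat.ascFactorial_succ, Nat.ascFactorial_succ, ih]
    ring

lemma ascPos (d k : ℕ) (hd : 0 < d) : 0 < d.ascFactorial k := by
  rw [ascFactorial_eq_prod_range']
  exact Finset.prod_pos fun i _ => by omega

lemma shifted_le (d S y : ℕ) (hd : 0 < d) :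
    ((d + S).ascFactorial y : ℝ) ≤ (d.ascFactorial y : ℝ) * Real.exp ((S : ℝ) * y / d) := by
  have hd' : (0 : ℝ) < d := by exact_mod_cast hd
  rw [ascFactorial_eq_prod_range', ascFactorial_eq_prod_range']
  push_cast
  have : Real.exp ((S : ℝ) * y / d) = ∏ _i ∈ Finset.range y, Real.exp (S / d) := by
    rw [Finset.prod_const, Finset.card_range, ← Real.exp_nat_mul]
    congr 1; ring
  rw [this, ← Finset.prod_mul_distrib]
  apply Finset.prod_le_prod
  · intro i _; positivity
  · intro i _
    have h1 : (1 : ℝ) + S / d ≤ Real.exp (S / d) := by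
      have := Real.add_one_le_exp ((S : ℝ) / d)
      linarith
    have h2 : ((d : ℝ) + S + i) ≤ ((d : ℝ) + i) * (1 + S / d) := by
      have heq : ((d : ℝ) + i) * (1 + S / d) - ((d : ℝ) + S + i) = (i : ℝ) * S / d := by
        field_simp; ring
      have hnn : (0 : ℝ) ≤ (i : ℝ) * S / d :=
        div_nonneg (mul_nonneg (Nat.cast_nonneg i) (Nat.cast_nonneg S)) hd'.le
      linarith
    calc ((d : ℝ) + S + i) ≤ ((d : ℝ) + i) * (1 + S / d) := h2
      _ ≤ ((d : ℝ) + i) * Real.exp (S / d) := by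
          apply mul_le_mul_of_nonneg_left h1; positivity

lemma main_aux (d : ℕ) (hd : 0 < d) : ∀ (T : ℕ) (y : Fin T → ℕ),
    (d.ascFactorial (∑ t, y t) : ℝ) ≤
      Real.exp (((∑ t, y t : ℕ) : ℝ) ^ 2 / d) * ∏ t, (d.ascFactorial (y t) : ℝ) := by
  intro T
  induction T with
  | zero =>
    intro y
    simp only [Finset.univ_eq_empty, Finset.sum_empty, Finset.prod_empty, Nat.ascFactorial_zero]
    simp [Real.one_le_exp_iff]
  | succ n ih =>
    intro y
    rw [Fin.sum_univ_succ, Fin.prod_univ_succ]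
    set a := y 0 with ha
    set S := ∑ t : Fin n, y t.succ with hS
    have key : (d.ascFactorial (a + S) : ℝ) =
        (d.ascFactorial a : ℝ) * ((d + a).ascFactorial S : ℝ) := by
      rw [ascFactorial_add']; push_cast; ring
    rw [key]
    have h1 := shifted_le d a S hd
    have h2 := ih (fun t => y t.succ)
    have hd' : (0 : ℝ) < d := by exact_mod_cast hd
    have hpos : (0 : ℝ) < (d.ascFactorial a : ℝ) := by
      exact_mod_cast ascPos d a hd
    calc (d.ascFactorial a : ℝ) * ((d + a).ascFactorial S : ℝ)
        ≤ (d.ascFactorial a : ℝ) * ((d.ascFactorial S : ℝ) * Real.exp ((a : ℝ) * S / d)) :=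
          mul_le_mul_of_nonneg_left h1 (le_of_lt hpos)
      _ ≤ (d.ascFactorial a : ℝ) *
          ((Real.exp (((S : ℕ) : ℝ) ^ 2 / d) * ∏ t : Fin n, (d.ascFactorial (y t.succ) : ℝ)) *
            Real.exp ((a : ℝ) * S / d)) := by
          apply mul_le_mul_of_nonneg_left _ (le_of_lt hpos)
          exact mul_le_mul_of_nonneg_right h2 (Real.exp_pos _).le
      _ ≤ Real.exp (((a + S : ℕ) : ℝ) ^ 2 / d) *
          ((d.ascFactorial a : ℝ) * ∏ t : Fin n, (d.ascFactorial (y t.succ) : ℝ)) := by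
          have hexp : Real.exp (((S : ℕ) : ℝ) ^ 2 / d) * Real.exp ((a : ℝ) * S / d) ≤
              Real.exp (((a + S : ℕ) : ℝ) ^ 2 / d) := by
            rw [← Real.exp_add]
            apply Real.exp_le_exp.mpr
            rw [← add_div, div_le_div_iff₀ hd' hd']
            push_cast
            apply mul_le_mul_of_nonneg_right _ hd'.le
            nlinarith [Nat.cast_nonneg (α := ℝ) a, Nat.cast_nonneg (α := ℝ) S]
          have heq : (d.ascFactorial a : ℝ) *
              ((Real.exp (((S : ℕ) : ℝ) ^ 2 / d) * ∏ t : Fin n, (d.ascFactorial (y t.succ) : ℝ)) *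
                Real.exp ((a : ℝ) * S / d)) =
              (Real.exp (((S : ℕ) : ℝ) ^ 2 / d) * Real.exp ((a : ℝ) * S / d)) *
                ((d.ascFactorial a : ℝ) * ∏ t : Fin n, (d.ascFactorial (y t.succ) : ℝ)) := by ring
          rw [heq]
          apply mul_le_mul_of_nonneg_right hexp
          positivity
  
/-- For positive `d` and nonnegative integers `y₁,…,y_T`, the ratio
`(∏ t, d^{↑ y t}) / d^{↑ (∑ t, y t)}` is at least `exp(−(∑ t, y t)² / d)`. -/
theorem prod_ascFactorial_div_ascFactorial_sum_ge (d T : ℕ) (hd : 0 < d) (y : Fin T → ℕ) :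
    Real.exp (-((∑ t, y t : ℕ) : ℝ) ^ 2 / d) ≤
      (∏ t, (d.ascFactorial (y t) : ℝ)) / (d.ascFactorial (∑ t, y t) : ℝ) := by
  have hpos : (0 : ℝ) < (d.ascFactorial (∑ t, y t) : ℝ) := by
    exact_mod_cast ascPos d _ hd
  rw [le_div_iff₀ hpos, neg_div, Real.exp_neg, inv_mul_le_iff₀ (Real.exp_pos _)]
  exact main_aux d hd T y
end

section
/- Let G_1, G_2 be positive semidefinite matrices. Then tr((G_1 ⊗ G_2) · S_{a+b}) ≥ tr(G_1 S_a) · tr(G_2 S_b), where G_1 acts on a qudits, G_2 acts on b qudits, all with local dimension d, and S_N = Σ_{π ∈ Sym(N)} π is the symmetrization operator summing all permutation operators on N qudits. -/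
open ComplexOrder
open Matrix
open scoped MatrixOrder

/-- The permutation operator on `(ℂ^d)^{⊗ι}`: it permutes the tensor factors indexed by `ι`
according to `π`. -/
def permMatrix (d : ℕ) {ι : Type*} [Fintype ι] [DecidableEq ι] (π : Equiv.Perm ι) :
    Matrix (ι → Fin d) (ι → Fin d) ℂ :=
  Matrix.of fun i j => if i ∘ π = j then 1 else 0

/-- The symmetrization operator `S = Σ_{π ∈ Sym(ι)} π` on `(ℂ^d)^{⊗ι}`. -/
noncomputable def symOp (d : ℕ) (ι : Type*) [Fintype ι] [DecidableEq ι] :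
    Matrix (ι → Fin d) (ι → Fin d) ℂ :=
  ∑ π : Equiv.Perm ι, permMatrix d π

section Basic
variable {d : ℕ} {ι : Type*} [Fintype ι] [DecidableEq ι]

lemma permMatrix_apply (π : Equiv.Perm ι) (i j : ι → Fin d) :
    permMatrix d π i j = if i ∘ π = j then 1 else 0 := rfl

lemma permMatrix_mul_apply (π : Equiv.Perm ι) (N : Matrix (ι → Fin d) (ι → Fin d) ℂ)
    (i : ι → Fin d) (j : ι → Fin d) :
    (permMatrix d π * N) i j = N (i ∘ π) j := by
  simp only [Matrix.mul_apply, permMatrix_apply, ite_mul, one_mul, zero_mul]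
  rw [Finset.sum_ite_eq (Finset.univ) (i ∘ π) (fun k => N k j)]
  simp

lemma mul_permMatrix_apply (π : Equiv.Perm ι) (N : Matrix (ι → Fin d) (ι → Fin d) ℂ)
    (i : ι → Fin d) (j : ι → Fin d) :
    (N * permMatrix d π) i j = N i (j ∘ π.symm) := by
  simp only [Matrix.mul_apply, permMatrix_apply, mul_ite, mul_one, mul_zero]
  have : ∀ k : ι → Fin d, (k ∘ π = j) ↔ (k = j ∘ π.symm) := by
    intro k
    constructor
    · intro h; funext s; have := congrFun h (π.symm s); simpa using this
    · intro h; funext s; simp [h]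
  simp_rw [this]
  rw [Finset.sum_ite_eq' (Finset.univ) (j ∘ ⇑π.symm) (fun k => N i k)]
  simp

lemma permMatrix_mul (π τ : Equiv.Perm ι) :
    permMatrix d π * permMatrix d τ = permMatrix d (π * τ) := by
  ext i j
  rw [permMatrix_mul_apply]
  simp only [permMatrix_apply]
  have h : (i ∘ ⇑π) ∘ ⇑τ = i ∘ ⇑(π * τ) := by funext s; rfl
  rw [h]

lemma symOp_mul_permMatrix (σ : Equiv.Perm ι) :
    symOp d ι * permMatrix d σ = symOp d ι := by
  rw [symOp, Matrix.sum_mul]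
  simp_rw [_root_.permMatrix_mul]
  exact Fintype.sum_equiv (Equiv.mulRight σ) _ _ (fun τ => rfl)

lemma permMatrix_mul_symOp (σ : Equiv.Perm ι) :
    permMatrix d σ * symOp d ι = symOp d ι := by
  rw [symOp, Matrix.mul_sum]
  simp_rw [_root_.permMatrix_mul]
  exact Fintype.sum_equiv (Equiv.mulLeft σ) _ _ (fun τ => rfl)

lemma symOp_mul_symOp :
    symOp d ι * symOp d ι = ((Fintype.card ι).factorial : ℂ) • symOp d ι := by
  nth_rewrite 1 [symOp]
  rw [Matrix.sum_mul]
  simp_rw [permMatrix_mul_symOp]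
  rw [Finset.sum_const, Finset.card_univ, Fintype.card_perm]
  exact (Nat.cast_smul_eq_nsmul ℂ _ _).symm

lemma permMatrix_conjTranspose (π : Equiv.Perm ι) :
    (permMatrix d π)ᴴ = permMatrix d π⁻¹ := by
  ext i j
  simp only [Matrix.conjTranspose_apply, permMatrix_apply]
  have h : (j ∘ ⇑π = i) ↔ (i ∘ ⇑(π⁻¹) = j) := by
    constructor
    · intro h; funext s; have := congrFun h (π⁻¹ s); simpa using this.symm
    · intro h; funext s; have := congrFun h (π s); simp at this; simp [this]
  rw [if_congr h rfl rfl]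
  split <;> simp

lemma symOp_conjTranspose : (symOp d ι)ᴴ = symOp d ι := by
  rw [symOp, Matrix.conjTranspose_sum]
  simp_rw [permMatrix_conjTranspose]
  exact Fintype.sum_equiv (Equiv.inv _) _ _ (fun τ => rfl)

lemma trace_mul_permMatrix (N : Matrix (ι → Fin d) (ι → Fin d) ℂ) (π : Equiv.Perm ι) :
    (N * permMatrix d π).trace = ∑ j : ι → Fin d, N (j ∘ π) j := by
  simp only [Matrix.trace, Matrix.diag, mul_permMatrix_apply]
  exact Fintype.sum_equiv (Equiv.arrowCongr π (Equiv.refl (Fin d))) _ _ (by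
    intro j
    congr 1 <;> · funext s; simp [Equiv.arrowCongr])

end Basic

section Key

variable {d : ℕ} {ι κ : Type*} [Fintype ι] [DecidableEq ι] [Fintype κ] [DecidableEq κ]

/-- invariance of a symmetric function under change of bijection -/
lemma symfun_comp_bij {f : (ι → Fin d) → ℂ} (hf : ∀ (σ : Equiv.Perm ι) r, f (r ∘ σ) = f r)
    {μ : Type*} {u v : ι → μ} (hu : Function.Bijective u) (hv : Function.Bijective v)
    (g : μ → Fin d) : f (g ∘ u) = f (g ∘ v) := by
  let eu := Equiv.ofBijective u hu
  let ev := Equiv.ofBijective v hv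
  have h : g ∘ u = (g ∘ v) ∘ ⇑(eu.trans ev.symm) := by
    funext s
    have h2 : v (ev.symm (u s)) = u s := ev.apply_symm_apply (u s)
    show g (u s) = g (v (ev.symm (u s)))
    rw [h2]
  rw [h, hf]

variable (ρ : (ι ⊕ κ) ≃ (ι ⊕ κ))

def pA (s : ι) : Prop := (ρ.symm (Sum.inl s)).isLeft
def pB (t : κ) : Prop := (ρ.symm (Sum.inr t)).isLeft

instance : DecidablePred (pA ρ) := fun s => decEq _ _
instance : DecidablePred (pB ρ) := fun t => decEq _ _

def rowA (z : {s // pA ρ s} → Fin d) (x : {s // ¬ pA ρ s} → Fin d) : ι → Fin d :=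
  fun s => if h : pA ρ s then z ⟨s, h⟩ else x ⟨s, h⟩

def rowB (y : {t // pB ρ t} → Fin d) (w : {t // ¬ pB ρ t} → Fin d) : κ → Fin d :=
  fun t => if h : pB ρ t then y ⟨t, h⟩ else w ⟨t, h⟩

def mkFun (z : {s // pA ρ s} → Fin d) (x : {s // ¬ pA ρ s} → Fin d)
    (y : {t // pB ρ t} → Fin d) (w : {t // ¬ pB ρ t} → Fin d) : ι ⊕ κ → Fin d :=
  Sum.elim (rowA ρ z x) (rowB ρ y w)

/-- row classification map for `ι` -/
def rAfn (s : ι) : {s // pA ρ s} ⊕ {s // ¬ pA ρ s} :=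
  if h : pA ρ s then Sum.inl ⟨s, h⟩ else Sum.inr ⟨s, h⟩

def rBfn (t : κ) : {t // pB ρ t} ⊕ {t // ¬ pB ρ t} :=
  if h : pB ρ t then Sum.inl ⟨t, h⟩ else Sum.inr ⟨t, h⟩

lemma rAfn_bijective : Function.Bijective (rAfn ρ) := by
  constructor
  · intro s s' h
    by_cases hs : pA ρ s <;> by_cases hs' : pA ρ s' <;>
      simp [rAfn, hs, hs'] at h <;> exact h
  · rintro (⟨s, h⟩ | ⟨s, h⟩)
    · exact ⟨s, by simp [rAfn, h]⟩
    · exact ⟨s, by simp [rAfn, h]⟩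

lemma rBfn_bijective : Function.Bijective (rBfn ρ) := by
  constructor
  · intro s s' h
    by_cases hs : pB ρ s <;> by_cases hs' : pB ρ s' <;>
      simp [rBfn, hs, hs'] at h <;> exact h
  · rintro (⟨s, h⟩ | ⟨s, h⟩)
    · exact ⟨s, by simp [rBfn, h]⟩
    · exact ⟨s, by simp [rBfn, h]⟩

lemma rowA_eq_elim (z : {s // pA ρ s} → Fin d) (x : {s // ¬ pA ρ s} → Fin d) : rowA ρ z x = Sum.elim z x ∘ rAfn ρ := by
  funext s
  by_cases h : pA ρ s <;> simp [rowA, rAfn, h]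

lemma rowB_eq_elim (y : {t // pB ρ t} → Fin d) (w : {t // ¬ pB ρ t} → Fin d) : rowB ρ y w = Sum.elim y w ∘ rBfn ρ := by
  funext t
  by_cases h : pB ρ t <;> simp [rowB, rBfn, h]

/-- column classification map for `ι`: where does the `ρ`-image of an `ι`-slot land -/
def cAfn (s : ι) : {s // pA ρ s} ⊕ {t // pB ρ t} :=
  if h : (ρ (Sum.inl s)).isLeft then
    Sum.inl ⟨(ρ (Sum.inl s)).getLeft h, by
      unfold pA
      rw [Sum.inl_getLeft _ h, Equiv.symm_apply_apply]
      rfl⟩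
  else
    Sum.inr ⟨(ρ (Sum.inl s)).getRight (by simpa [Sum.not_isLeft] using h), by
      unfold pB
      rw [Sum.inr_getRight _ (by simpa [Sum.not_isLeft] using h), Equiv.symm_apply_apply]
      rfl⟩

def cBfn (t : κ) : {s // ¬ pA ρ s} ⊕ {t // ¬ pB ρ t} :=
  if h : (ρ (Sum.inr t)).isLeft then
    Sum.inl ⟨(ρ (Sum.inr t)).getLeft h, by
      unfold pA
      rw [Sum.inl_getLeft _ h, Equiv.symm_apply_apply]
      simp⟩
  else
    Sum.inr ⟨(ρ (Sum.inr t)).getRight (by simpa [Sum.not_isLeft] using h), by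
      unfold pB
      rw [Sum.inr_getRight _ (by simpa [Sum.not_isLeft] using h), Equiv.symm_apply_apply]
      simp⟩

lemma cAfn_bijective : Function.Bijective (cAfn ρ) := by
  constructor
  · intro s s' h
    by_cases hs : (ρ (Sum.inl s)).isLeft <;> by_cases hs' : (ρ (Sum.inl s')).isLeft <;>
      simp only [cAfn, hs, hs', dif_pos, dif_neg, not_false_iff] at h
    · rcases Sum.isLeft_iff.mp hs with ⟨u, hu⟩
      rcases Sum.isLeft_iff.mp hs' with ⟨u', hu'⟩
      have : u = u' := by simpa [hu, hu'] using (congrArg (fun q => Sum.map Subtype.val Subtype.val q) h)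
      have h2 : ρ (Sum.inl s) = ρ (Sum.inl s') := by rw [hu, hu', this]
      simpa using ρ.injective h2
    · exact absurd h (by simp)
    · exact absurd h (by simp)
    · rcases Sum.not_isLeft.mp hs with h1
      rcases Sum.isRight_iff.mp h1 with ⟨u, hu⟩
      rcases Sum.isRight_iff.mp (Sum.not_isLeft.mp hs') with ⟨u', hu'⟩
      have : u = u' := by simpa [hu, hu'] using (congrArg (fun q => Sum.map Subtype.val Subtype.val q) h)
      have h2 : ρ (Sum.inl s) = ρ (Sum.inl s') := by rw [hu, hu', this]
      simpa using ρ.injective h2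
  · rintro (⟨s₁, h⟩ | ⟨t₁, h⟩)
    · unfold pA at h
      rcases Sum.isLeft_iff.mp h with ⟨s, hs⟩
      refine ⟨s, ?_⟩
      have hρ : ρ (Sum.inl s) = Sum.inl s₁ := by
        rw [← hs]; exact (ρ.apply_symm_apply _)
      simp [cAfn, hρ]
    · unfold pB at h
      rcases Sum.isLeft_iff.mp h with ⟨s, hs⟩
      refine ⟨s, ?_⟩
      have hρ : ρ (Sum.inl s) = Sum.inr t₁ := by
        rw [← hs]; exact (ρ.apply_symm_apply _)
      simp [cAfn, hρ]

lemma cBfn_bijective : Function.Bijective (cBfn ρ) := by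
  constructor
  · intro s s' h
    by_cases hs : (ρ (Sum.inr s)).isLeft <;> by_cases hs' : (ρ (Sum.inr s')).isLeft <;>
      simp only [cBfn, hs, hs', dif_pos, dif_neg, not_false_iff] at h
    · rcases Sum.isLeft_iff.mp hs with ⟨u, hu⟩
      rcases Sum.isLeft_iff.mp hs' with ⟨u', hu'⟩
      have : u = u' := by simpa [hu, hu'] using (congrArg (fun q => Sum.map Subtype.val Subtype.val q) h)
      have h2 : ρ (Sum.inr s) = ρ (Sum.inr s') := by rw [hu, hu', this]
      simpa using ρ.injective h2
    · exact absurd h (by simp)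
    · exact absurd h (by simp)
    · rcases Sum.isRight_iff.mp (Sum.not_isLeft.mp hs) with ⟨u, hu⟩
      rcases Sum.isRight_iff.mp (Sum.not_isLeft.mp hs') with ⟨u', hu'⟩
      have : u = u' := by simpa [hu, hu'] using (congrArg (fun q => Sum.map Subtype.val Subtype.val q) h)
      have h2 : ρ (Sum.inr s) = ρ (Sum.inr s') := by rw [hu, hu', this]
      simpa using ρ.injective h2
  · rintro (⟨s₁, h⟩ | ⟨t₁, h⟩)
    · unfold pA at h
      have h' : (ρ.symm (Sum.inl s₁)).isRight := Sum.not_isLeft.mp h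
      rcases Sum.isRight_iff.mp h' with ⟨t, ht⟩
      refine ⟨t, ?_⟩
      have hρ : ρ (Sum.inr t) = Sum.inl s₁ := by
        rw [← ht]; exact (ρ.apply_symm_apply _)
      simp [cBfn, hρ]
    · unfold pB at h
      have h' : (ρ.symm (Sum.inr t₁)).isRight := Sum.not_isLeft.mp h
      rcases Sum.isRight_iff.mp h' with ⟨t, ht⟩
      refine ⟨t, ?_⟩
      have hρ : ρ (Sum.inr t) = Sum.inr t₁ := by
        rw [← ht]; exact (ρ.apply_symm_apply _)
      simp [cBfn, hρ]

lemma mk_comp_inl (z : {s // pA ρ s} → Fin d) (x : {s // ¬ pA ρ s} → Fin d)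
    (y : {t // pB ρ t} → Fin d) (w : {t // ¬ pB ρ t} → Fin d) :
    mkFun ρ z x y w ∘ Sum.inl = rowA ρ z x := rfl
lemma mk_comp_inr (z : {s // pA ρ s} → Fin d) (x : {s // ¬ pA ρ s} → Fin d)
    (y : {t // pB ρ t} → Fin d) (w : {t // ¬ pB ρ t} → Fin d) :
    mkFun ρ z x y w ∘ Sum.inr = rowB ρ y w := rfl

lemma mk_comp_rho_inl (z : {s // pA ρ s} → Fin d) (x : {s // ¬ pA ρ s} → Fin d)
    (y : {t // pB ρ t} → Fin d) (w : {t // ¬ pB ρ t} → Fin d) :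
    mkFun ρ z x y w ∘ ⇑ρ ∘ Sum.inl = Sum.elim z y ∘ cAfn ρ := by
  funext s
  show mkFun ρ z x y w (ρ (Sum.inl s)) = Sum.elim z y (cAfn ρ s)
  by_cases h : (ρ (Sum.inl s)).isLeft
  · rcases Sum.isLeft_iff.mp h with ⟨s₁, hs₁⟩
    have hpA : pA ρ s₁ := by unfold pA; rw [← hs₁, Equiv.symm_apply_apply]; rfl
    rw [hs₁]
    simp only [mkFun, Sum.elim_inl, cAfn]
    rw [dif_pos (by rw [hs₁]; rfl : (ρ (Sum.inl s)).isLeft)]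
    simp only [Sum.elim_inl]
    have : (ρ (Sum.inl s)).getLeft (by rw [hs₁]; rfl) = s₁ := by simp [hs₁]
    simp only [rowA]
    rw [dif_pos hpA]
    congr 1
    · exact Subtype.ext this.symm
  · rcases Sum.isRight_iff.mp (Sum.not_isLeft.mp h) with ⟨t₁, ht₁⟩
    have hpB : pB ρ t₁ := by unfold pB; rw [← ht₁, Equiv.symm_apply_apply]; rfl
    rw [ht₁]
    simp only [mkFun, Sum.elim_inr, cAfn]
    rw [dif_neg (by rw [ht₁]; simp : ¬ (ρ (Sum.inl s)).isLeft)]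
    simp only [Sum.elim_inr]
    have : (ρ (Sum.inl s)).getRight (by rw [ht₁]; rfl) = t₁ := by simp [ht₁]
    simp only [rowB]
    rw [dif_pos hpB]
    congr 1
    · exact Subtype.ext this.symm

lemma mk_comp_rho_inr (z : {s // pA ρ s} → Fin d) (x : {s // ¬ pA ρ s} → Fin d)
    (y : {t // pB ρ t} → Fin d) (w : {t // ¬ pB ρ t} → Fin d) :
    mkFun ρ z x y w ∘ ⇑ρ ∘ Sum.inr = Sum.elim x w ∘ cBfn ρ := by
  funext t
  show mkFun ρ z x y w (ρ (Sum.inr t)) = Sum.elim x w (cBfn ρ t)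
  by_cases h : (ρ (Sum.inr t)).isLeft
  · rcases Sum.isLeft_iff.mp h with ⟨s₁, hs₁⟩
    have hpA : ¬ pA ρ s₁ := by unfold pA; rw [← hs₁, Equiv.symm_apply_apply]; simp
    rw [hs₁]
    simp only [mkFun, Sum.elim_inl, cBfn]
    rw [dif_pos (by rw [hs₁]; rfl : (ρ (Sum.inr t)).isLeft)]
    simp only [Sum.elim_inl]
    have : (ρ (Sum.inr t)).getLeft (by rw [hs₁]; rfl) = s₁ := by simp [hs₁]
    simp only [rowA]
    rw [dif_neg hpA]
    congr 1
    · exact Subtype.ext this.symm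
  · rcases Sum.isRight_iff.mp (Sum.not_isLeft.mp h) with ⟨t₁, ht₁⟩
    have hpB : ¬ pB ρ t₁ := by unfold pB; rw [← ht₁, Equiv.symm_apply_apply]; simp
    rw [ht₁]
    simp only [mkFun, Sum.elim_inr, cBfn]
    rw [dif_neg (by rw [ht₁]; simp : ¬ (ρ (Sum.inr t)).isLeft)]
    simp only [Sum.elim_inr]
    have : (ρ (Sum.inr t)).getRight (by rw [ht₁]; rfl) = t₁ := by simp [ht₁]
    simp only [rowB]
    rw [dif_neg hpB]
    congr 1
    · exact Subtype.ext this.symm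

lemma card_X_eq_card_Y :
    Fintype.card {s // ¬ pA ρ s} = Fintype.card {t // pB ρ t} := by
  have h1 : Fintype.card ι = Fintype.card {s // pA ρ s} + Fintype.card {s // ¬ pA ρ s} := by
    have := Fintype.card_congr (Equiv.ofBijective _ (rAfn_bijective ρ))
    simpa [Fintype.card_sum] using this
  have h2 : Fintype.card ι = Fintype.card {s // pA ρ s} + Fintype.card {t // pB ρ t} := by
    have := Fintype.card_congr (Equiv.ofBijective _ (cAfn_bijective ρ))
    simpa [Fintype.card_sum] using this
  omega

lemma mkFun_bijective :
    Function.Bijective (fun p : (({s // pA ρ s} → Fin d) × ({s // ¬ pA ρ s} → Fin d)) ×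
        (({t // pB ρ t} → Fin d) × ({t // ¬ pB ρ t} → Fin d)) =>
      mkFun ρ p.1.1 p.1.2 p.2.1 p.2.2) := by
  constructor
  · rintro ⟨⟨z, x⟩, ⟨y, w⟩⟩ ⟨⟨z', x'⟩, ⟨y', w'⟩⟩ h
    simp only [Prod.mk.injEq]
    refine ⟨⟨?_, ?_⟩, ?_, ?_⟩ <;> funext p
    · have := congrFun h (Sum.inl p.1)
      simpa [mkFun, rowA, p.2] using this
    · have := congrFun h (Sum.inl p.1)
      simpa [mkFun, rowA, p.2] using this
    · have := congrFun h (Sum.inr p.1)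
      simpa [mkFun, rowB, p.2] using this
    · have := congrFun h (Sum.inr p.1)
      simpa [mkFun, rowB, p.2] using this
  · intro i
    refine ⟨⟨⟨fun p => i (Sum.inl p.1), fun p => i (Sum.inl p.1)⟩,
      ⟨fun p => i (Sum.inr p.1), fun p => i (Sum.inr p.1)⟩⟩, ?_⟩
    funext q
    rcases q with s | t
    · by_cases h : pA ρ s <;> simp [mkFun, rowA, h]
    · by_cases h : pB ρ t <;> simp [mkFun, rowB, h]
lemma rearrange {X Y ML MN : Type*} [Fintype X] [Fintype Y] [Fintype ML] [Fintype MN]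
    (a : X → ML → ℂ) (b : Y → ML → ℂ) (c : Y → MN → ℂ) (e : X → MN → ℂ) :
    ∑ x, ∑ y, (∑ m, a x m * b y m) * (∑ n, c y n * e x n)
      = ∑ m, ∑ n, (∑ x, a x m * e x n) * (∑ y, b y m * c y n) := by
  simp_rw [Finset.sum_mul_sum]
  have h : ∀ (x : X) (y : Y) (m : ML) (n : MN),
      (a x m * b y m) * (c y n * e x n) = (a x m * e x n) * (b y m * c y n) := by
    intros; ring
  simp_rw [h]
  rw [Finset.sum_comm]
  calc ∑ y : Y, ∑ x : X, ∑ m : ML, ∑ n : MN, a x m * e x n * (b y m * c y n)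
      = ∑ y : Y, ∑ m : ML, ∑ x : X, ∑ n : MN, a x m * e x n * (b y m * c y n) :=
        Finset.sum_congr rfl (fun y _ => Finset.sum_comm)
    _ = ∑ m : ML, ∑ y : Y, ∑ x : X, ∑ n : MN, a x m * e x n * (b y m * c y n) :=
        Finset.sum_comm
    _ = ∑ m : ML, ∑ y : Y, ∑ n : MN, ∑ x : X, a x m * e x n * (b y m * c y n) :=
        Finset.sum_congr rfl (fun m _ => Finset.sum_congr rfl (fun y _ => Finset.sum_comm))
    _ = ∑ m : ML, ∑ n : MN, ∑ y : Y, ∑ x : X, a x m * e x n * (b y m * c y n) :=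
        Finset.sum_congr rfl (fun m _ => Finset.sum_comm)
    _ = ∑ m : ML, ∑ n : MN, ∑ x : X, ∑ y : Y, a x m * e x n * (b y m * c y n) :=
        Finset.sum_congr rfl (fun m _ => Finset.sum_congr rfl (fun n _ => Finset.sum_comm))

theorem key_nonneg {μL μM : Type*} [Fintype μL] [Fintype μM]
    (L : Matrix (ι → Fin d) μL ℂ) (M : Matrix (κ → Fin d) μM ℂ)
    (hL : ∀ (σ : Equiv.Perm ι) (r : ι → Fin d) (m : μL), L (r ∘ σ) m = L r m)
    (hM : ∀ (σ : Equiv.Perm κ) (r : κ → Fin d) (n : μM), M (r ∘ σ) n = M r n) :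
    0 ≤ ∑ i : (ι ⊕ κ) → Fin d,
        (L * Lᴴ) (i ∘ Sum.inl) (i ∘ ⇑ρ ∘ Sum.inl) * (M * Mᴴ) (i ∘ Sum.inr) (i ∘ ⇑ρ ∘ Sum.inr) := by
  obtain φ := Fintype.equivOfCardEq (card_X_eq_card_Y ρ)
  have hbij : Function.Bijective
      (fun p : (({s // pA ρ s} → Fin d) × ({t // ¬ pB ρ t} → Fin d)) ×
          (({s // ¬ pA ρ s} → Fin d) × ({t // pB ρ t} → Fin d)) =>
        mkFun ρ p.1.1 p.2.1 p.2.2 p.1.2) := by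
    have hsh : Function.Bijective
        (fun p : (({s // pA ρ s} → Fin d) × ({t // ¬ pB ρ t} → Fin d)) ×
            (({s // ¬ pA ρ s} → Fin d) × ({t // pB ρ t} → Fin d)) =>
          (((p.1.1, p.2.1), (p.2.2, p.1.2)) :
            (({s // pA ρ s} → Fin d) × ({s // ¬ pA ρ s} → Fin d)) ×
              (({t // pB ρ t} → Fin d) × ({t // ¬ pB ρ t} → Fin d)))) := by
      constructor
      · rintro ⟨⟨z, w⟩, ⟨x, y⟩⟩ ⟨⟨z', w'⟩, ⟨x', y'⟩⟩ h
        simp only [Prod.mk.injEq] at h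
        simp [Prod.mk.injEq, h.1.1, h.1.2, h.2.1, h.2.2]
      · rintro ⟨⟨z, x⟩, ⟨y, w⟩⟩
        exact ⟨⟨⟨z, w⟩, ⟨x, y⟩⟩, rfl⟩
    exact (mkFun_bijective ρ).comp hsh
  have hsum := Fintype.sum_bijective _ hbij
    (fun p => (L * Lᴴ) (mkFun ρ p.1.1 p.2.1 p.2.2 p.1.2 ∘ Sum.inl)
        (mkFun ρ p.1.1 p.2.1 p.2.2 p.1.2 ∘ ⇑ρ ∘ Sum.inl) *
      (M * Mᴴ) (mkFun ρ p.1.1 p.2.1 p.2.2 p.1.2 ∘ Sum.inr)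
        (mkFun ρ p.1.1 p.2.1 p.2.2 p.1.2 ∘ ⇑ρ ∘ Sum.inr))
    (fun i => (L * Lᴴ) (i ∘ Sum.inl) (i ∘ ⇑ρ ∘ Sum.inl) *
      (M * Mᴴ) (i ∘ Sum.inr) (i ∘ ⇑ρ ∘ Sum.inr))
    (fun p => rfl)
  rw [← hsum]
  have hterm : ∀ z x y w,
      (L * Lᴴ) (mkFun ρ z x y w ∘ Sum.inl) (mkFun ρ z x y w ∘ ⇑ρ ∘ Sum.inl) *
        (M * Mᴴ) (mkFun ρ z x y w ∘ Sum.inr) (mkFun ρ z x y w ∘ ⇑ρ ∘ Sum.inr)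
      = (∑ m, L (rowA ρ z x) m * star (L (rowA ρ z (fun s => y (φ s))) m)) *
        (∑ n, M (rowB ρ y w) n * star (M (rowB ρ (fun t => x (φ.symm t)) w) n)) := by
    intro z x y w
    rw [mk_comp_inl, mk_comp_inr, mk_comp_rho_inl, mk_comp_rho_inr]
    simp only [Matrix.mul_apply, Matrix.conjTranspose_apply]
    congr 1
    · apply Finset.sum_congr rfl
      intro m _
      congr 2
      have hb1 : Function.Bijective (cAfn ρ) := cAfn_bijective ρ
      have hb2 : Function.Bijective (Sum.map id ⇑φ ∘ rAfn ρ) :=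
        (Function.Bijective.sumMap Function.bijective_id φ.bijective).comp (rAfn_bijective ρ)
      have := symfun_comp_bij (f := fun r => L r m) (fun σ r => hL σ r m) hb1 hb2 (Sum.elim z y)
      rw [this]
      have he : Sum.elim z y ∘ (Sum.map id ⇑φ ∘ rAfn ρ) = Sum.elim z (fun s => y (φ s)) ∘ rAfn ρ := by
        funext s
        rcases hh : rAfn ρ s with p | p <;> simp [Function.comp, hh]
      rw [he, ← rowA_eq_elim]
    · apply Finset.sum_congr rfl
      intro n _
      congr 2
      have hb1 : Function.Bijective (cBfn ρ) := cBfn_bijective ρ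
      have hb2 : Function.Bijective (Sum.map ⇑φ.symm id ∘ rBfn ρ) :=
        (Function.Bijective.sumMap φ.symm.bijective Function.bijective_id).comp (rBfn_bijective ρ)
      have := symfun_comp_bij (f := fun r => M r n) (fun σ r => hM σ r n) hb1 hb2 (Sum.elim x w)
      rw [this]
      have he : Sum.elim x w ∘ (Sum.map ⇑φ.symm id ∘ rBfn ρ) = Sum.elim (fun t => x (φ.symm t)) w ∘ rBfn ρ := by
        funext t
        rcases hh : rBfn ρ t with p | p <;> simp [Function.comp, hh]
      rw [he, ← rowB_eq_elim]
  rw [Fintype.sum_prod_type]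
  simp_rw [Fintype.sum_prod_type]
  simp_rw [hterm]
  apply Finset.sum_nonneg
  intro z _
  apply Finset.sum_nonneg
  intro w _
  rw [rearrange (fun x m => L (rowA ρ z x) m)
      (fun y m => star (L (rowA ρ z (fun s => y (φ s))) m))
      (fun y n => M (rowB ρ y w) n)
      (fun x n => star (M (rowB ρ (fun t => x (φ.symm t)) w) n))]
  apply Finset.sum_nonneg
  intro m _
  apply Finset.sum_nonneg
  intro n _
  have hswap : (∑ y, star (L (rowA ρ z (fun s => y (φ s))) m) * M (rowB ρ y w) n)
      = star (∑ x, L (rowA ρ z x) m * star (M (rowB ρ (fun t => x (φ.symm t)) w) n)) := by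
    rw [star_sum]
    refine Fintype.sum_bijective (fun (y : {t // pB ρ t} → Fin d) =>
        (fun s => y (φ s) : {s // ¬ pA ρ s} → Fin d)) ⟨?_, ?_⟩ _ _ ?_
    · intro y y' h
      funext t
      have := congrFun h (φ.symm t)
      simpa using this
    · intro x
      exact ⟨fun t => x (φ.symm t), by funext s; simp⟩
    · intro y
      have h1 : (fun t => (fun s => y (φ s)) (φ.symm t)) = y := by funext t; simp
      rw [star_mul', star_star, h1]
  rw [hswap]
  exact mul_star_self_nonneg _

end Key

section Tensor

variable {d a b : ℕ}

/-- tensor product of matrices on `a` and `b` qudits -/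
def tens (M : Matrix (Fin a → Fin d) (Fin a → Fin d) ℂ)
    (N : Matrix (Fin b → Fin d) (Fin b → Fin d) ℂ) :
    Matrix (Fin (a + b) → Fin d) (Fin (a + b) → Fin d) ℂ :=
  Matrix.of fun i j =>
    M (fun t => i (Fin.castAdd b t)) (fun t => j (Fin.castAdd b t)) *
      N (fun t => i (Fin.natAdd a t)) (fun t => j (Fin.natAdd a t))

lemma append_bijective :
    Function.Bijective (fun p : (Fin a → Fin d) × (Fin b → Fin d) => Fin.append p.1 p.2) := by
  constructor
  · rintro ⟨r, s⟩ ⟨r', s'⟩ h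
    simp only [Prod.mk.injEq]
    constructor
    · funext t
      have := congrFun h (Fin.castAdd b t)
      simpa [Fin.append_left] using this
    · funext t
      have := congrFun h (Fin.natAdd a t)
      simpa [Fin.append_right] using this
  · intro k
    refine ⟨⟨fun t => k (Fin.castAdd b t), fun t => k (Fin.natAdd a t)⟩, ?_⟩
    funext p
    refine Fin.addCases ?_ ?_ p
    · intro t; simp [Fin.append_left]
    · intro t; simp [Fin.append_right]

lemma sum_append {α : Type*} [AddCommMonoid α] (F : (Fin (a + b) → Fin d) → α) :
    ∑ k, F k = ∑ r : Fin a → Fin d, ∑ s : Fin b → Fin d, F (Fin.append r s) := by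
  have h := Fintype.sum_bijective _ (append_bijective (d := d) (a := a) (b := b))
    (fun p => F (Fin.append p.1 p.2)) F (fun p => rfl)
  rw [← h, Fintype.sum_prod_type]

lemma append_comp_castAdd (r : Fin a → Fin d) (s : Fin b → Fin d) :
    (fun t => Fin.append r s (Fin.castAdd b t)) = r :=
  funext fun t => Fin.append_left r s t

lemma append_comp_natAdd (r : Fin a → Fin d) (s : Fin b → Fin d) :
    (fun t => Fin.append r s (Fin.natAdd a t)) = s :=
  funext fun t => Fin.append_right r s t

lemma tens_mul (M M' : Matrix (Fin a → Fin d) (Fin a → Fin d) ℂ)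
    (N N' : Matrix (Fin b → Fin d) (Fin b → Fin d) ℂ) :
    tens (M * M') (N * N') = tens M N * tens M' N' := by
  ext i j
  show (M * M') _ _ * (N * N') _ _ = _
  rw [Matrix.mul_apply, Matrix.mul_apply, Matrix.mul_apply, Finset.sum_mul_sum]
  rw [sum_append (fun k => tens M N i k * tens M' N' k j)]
  apply Finset.sum_congr rfl
  intro r _
  apply Finset.sum_congr rfl
  intro s _
  show M _ r * M' r _ * (N _ s * N' s _) =
    M _ _ * N _ _ * (M' _ _ * N' _ _)
  rw [append_comp_castAdd, append_comp_natAdd]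
  ring

lemma tens_trace (M : Matrix (Fin a → Fin d) (Fin a → Fin d) ℂ)
    (N : Matrix (Fin b → Fin d) (Fin b → Fin d) ℂ) :
    (tens M N).trace = M.trace * N.trace := by
  simp only [Matrix.trace, Matrix.diag]
  rw [sum_append (fun k => tens M N k k), Finset.sum_mul_sum]
  apply Finset.sum_congr rfl
  intro r _
  apply Finset.sum_congr rfl
  intro s _
  show M _ _ * N _ _ = _
  rw [append_comp_castAdd, append_comp_natAdd]

/-- block embedding of a pair of permutations -/
def embPerm (σ : Equiv.Perm (Fin a)) (τ : Equiv.Perm (Fin b)) : Equiv.Perm (Fin (a + b)) :=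
  finSumFinEquiv.permCongr (Equiv.Perm.sumCongrHom _ _ (σ, τ))

lemma embPerm_castAdd (σ : Equiv.Perm (Fin a)) (τ : Equiv.Perm (Fin b)) (s : Fin a) :
    embPerm σ τ (Fin.castAdd b s) = Fin.castAdd b (σ s) := by
  simp [embPerm, Equiv.permCongr_apply, finSumFinEquiv_symm_apply_castAdd,
    Equiv.Perm.sumCongrHom_apply]

lemma embPerm_natAdd (σ : Equiv.Perm (Fin a)) (τ : Equiv.Perm (Fin b)) (t : Fin b) :
    embPerm σ τ (Fin.natAdd a t) = Fin.natAdd a (τ t) := by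
  simp [embPerm, Equiv.permCongr_apply, finSumFinEquiv_symm_apply_natAdd,
    Equiv.Perm.sumCongrHom_apply]

lemma embPerm_injective :
    Function.Injective (fun p : Equiv.Perm (Fin a) × Equiv.Perm (Fin b) => embPerm p.1 p.2) := by
  intro p p' h
  apply Equiv.Perm.sumCongrHom_injective (α := Fin a) (β := Fin b)
  exact (finSumFinEquiv.permCongr.injective h)

lemma tens_permMatrix (σ : Equiv.Perm (Fin a)) (τ : Equiv.Perm (Fin b)) :
    tens (permMatrix d σ) (permMatrix d τ) = permMatrix d (embPerm σ τ) := by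
  ext i j
  show (if _ then (1:ℂ) else 0) * (if _ then (1:ℂ) else 0) = (if _ then (1:ℂ) else 0)
  have hiff : (((fun t => i (Fin.castAdd b t)) ∘ σ = fun t => j (Fin.castAdd b t)) ∧
      ((fun t => i (Fin.natAdd a t)) ∘ τ = fun t => j (Fin.natAdd a t))) ↔
      (i ∘ ⇑(embPerm σ τ) = j) := by
    constructor
    · rintro ⟨h1, h2⟩
      funext p
      refine Fin.addCases ?_ ?_ p
      · intro t
        show i (embPerm σ τ (Fin.castAdd b t)) = _
        rw [embPerm_castAdd]
        exact congrFun h1 t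
      · intro t
        show i (embPerm σ τ (Fin.natAdd a t)) = _
        rw [embPerm_natAdd]
        exact congrFun h2 t
    · intro h
      constructor
      · funext t
        have := congrFun h (Fin.castAdd b t)
        simpa [embPerm_castAdd] using this
      · funext t
        have := congrFun h (Fin.natAdd a t)
        simpa [embPerm_natAdd] using this
  rcases Classical.em (i ∘ ⇑(embPerm σ τ) = j) with h | h
  · obtain ⟨h1, h2⟩ := hiff.mpr h
    rw [if_pos h1, if_pos h2, if_pos h, one_mul]
  · rw [if_neg h]
    rcases Classical.em ((fun t => i (Fin.castAdd b t)) ∘ ⇑σ = fun t => j (Fin.castAdd b t)) with h1 | h1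
    · rcases Classical.em ((fun t => i (Fin.natAdd a t)) ∘ ⇑τ = fun t => j (Fin.natAdd a t)) with h2 | h2
      · exact absurd (hiff.mp ⟨h1, h2⟩) h
      · rw [if_neg h2, mul_zero]
    · rw [if_neg h1, zero_mul]

lemma tens_symOp :
    tens (symOp d (Fin a)) (symOp d (Fin b)) =
      ∑ p : Equiv.Perm (Fin a) × Equiv.Perm (Fin b), permMatrix d (embPerm p.1 p.2) := by
  ext i j
  show (symOp d (Fin a)) _ _ * (symOp d (Fin b)) _ _ = _
  rw [symOp, symOp, Matrix.sum_apply, Matrix.sum_apply, Finset.sum_mul_sum, Matrix.sum_apply,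
    Fintype.sum_prod_type]
  apply Finset.sum_congr rfl
  intro σ _
  apply Finset.sum_congr rfl
  intro τ _
  have := congrFun (congrFun (congrArg (fun (X : Matrix _ _ ℂ) => (X : _ → _ → ℂ))
    (tens_permMatrix (d := d) σ τ)) i) j
  exact this

lemma tensS_mul_symOp :
    tens (symOp d (Fin a)) (symOp d (Fin b)) * symOp d (Fin (a + b)) =
      ((a.factorial * b.factorial : ℕ) : ℂ) • symOp d (Fin (a + b)) := by
  rw [tens_symOp, Matrix.sum_mul]
  simp_rw [permMatrix_mul_symOp]
  rw [Finset.sum_const, Finset.card_univ, Fintype.card_prod, Fintype.card_perm, Fintype.card_perm,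
    Fintype.card_fin, Fintype.card_fin]
  exact (Nat.cast_smul_eq_nsmul ℂ _ _).symm

lemma symOp_mul_tensS :
    symOp d (Fin (a + b)) * tens (symOp d (Fin a)) (symOp d (Fin b)) =
      ((a.factorial * b.factorial : ℕ) : ℂ) • symOp d (Fin (a + b)) := by
  rw [tens_symOp, Matrix.mul_sum]
  simp_rw [symOp_mul_permMatrix]
  rw [Finset.sum_const, Finset.card_univ, Fintype.card_prod, Fintype.card_perm, Fintype.card_perm,
    Fintype.card_fin, Fintype.card_fin]
  exact (Nat.cast_smul_eq_nsmul ℂ _ _).symm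

end Tensor

/-- For positive semidefinite `G₁` on `a` qudits and `G₂` on `b` qudits
(local dimension `d`), `tr((G₁ ⊗ G₂) S_{a+b}) ≥ tr(G₁ S_a) · tr(G₂ S_b)`. -/
theorem trace_tensor_symOp_ge (d a b : ℕ)
    (G₁ : Matrix (Fin a → Fin d) (Fin a → Fin d) ℂ)
    (G₂ : Matrix (Fin b → Fin d) (Fin b → Fin d) ℂ)
    (hG₁ : G₁.PosSemidef) (hG₂ : G₂.PosSemidef) :
    ((G₁ * symOp d (Fin a)).trace).re * ((G₂ * symOp d (Fin b)).trace).re ≤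
      (((Matrix.of fun i j : Fin (a + b) → Fin d =>
          G₁ (fun t => i (Fin.castAdd b t)) (fun t => j (Fin.castAdd b t)) *
            G₂ (fun t => i (Fin.natAdd a t)) (fun t => j (Fin.natAdd a t))) *
        symOp d (Fin (a + b))).trace).re := by
  classical
  set S1 := symOp d (Fin a) with hS1
  set S2 := symOp d (Fin b) with hS2
  set Sab := symOp d (Fin (a + b)) with hSab
  set L : Matrix (Fin a → Fin d) (Fin a → Fin d) ℂ := S1 * CFC.sqrt G₁ with hLdef
  set M : Matrix (Fin b → Fin d) (Fin b → Fin d) ℂ := S2 * CFC.sqrt G₂ with hMdef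
  have hL : ∀ (σ : Equiv.Perm (Fin a)) (r : Fin a → Fin d) (m : Fin a → Fin d),
      L (r ∘ σ) m = L r m := by
    intro σ r m
    have h : permMatrix d σ * L = L := by
      rw [hLdef, ← Matrix.mul_assoc, hS1, permMatrix_mul_symOp]
    conv_rhs => rw [← h]
    rw [permMatrix_mul_apply]
  have hM : ∀ (σ : Equiv.Perm (Fin b)) (r : Fin b → Fin d) (m : Fin b → Fin d),
      M (r ∘ σ) m = M r m := by
    intro σ r m
    have h : permMatrix d σ * M = M := by
      rw [hMdef, ← Matrix.mul_assoc, hS2, permMatrix_mul_symOp]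
    conv_rhs => rw [← h]
    rw [permMatrix_mul_apply]
  have hA : L * Lᴴ = S1 * G₁ * S1 := by
    rw [hLdef, Matrix.conjTranspose_mul, (Matrix.nonneg_iff_posSemidef.mp (CFC.sqrt_nonneg G₁)).1, hS1, symOp_conjTranspose]
    rw [Matrix.mul_assoc, ← Matrix.mul_assoc (CFC.sqrt G₁), CFC.sqrt_mul_sqrt_self G₁ (Matrix.nonneg_iff_posSemidef.mpr hG₁), ← Matrix.mul_assoc]
  have hB : M * Mᴴ = S2 * G₂ * S2 := by
    rw [hMdef, Matrix.conjTranspose_mul, (Matrix.nonneg_iff_posSemidef.mp (CFC.sqrt_nonneg G₂)).1, hS2, symOp_conjTranspose]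
    rw [Matrix.mul_assoc, ← Matrix.mul_assoc (CFC.sqrt G₂), CFC.sqrt_mul_sqrt_self G₂ (Matrix.nonneg_iff_posSemidef.mpr hG₂), ← Matrix.mul_assoc]
  have htrA : (L * Lᴴ).trace = (a.factorial : ℂ) * (G₁ * S1).trace := by
    rw [hA]
    calc (S1 * G₁ * S1).trace = (S1 * (S1 * G₁)).trace := Matrix.trace_mul_comm _ _
      _ = ((S1 * S1) * G₁).trace := by rw [Matrix.mul_assoc]
      _ = (((a.factorial : ℂ) • S1) * G₁).trace := by
            rw [hS1, symOp_mul_symOp, Fintype.card_fin]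
      _ = (a.factorial : ℂ) * (S1 * G₁).trace := by
            rw [Matrix.smul_mul, Matrix.trace_smul, smul_eq_mul]
      _ = (a.factorial : ℂ) * (G₁ * S1).trace := by rw [Matrix.trace_mul_comm]
  have htrB : (M * Mᴴ).trace = (b.factorial : ℂ) * (G₂ * S2).trace := by
    rw [hB]
    calc (S2 * G₂ * S2).trace = (S2 * (S2 * G₂)).trace := Matrix.trace_mul_comm _ _
      _ = ((S2 * S2) * G₂).trace := by rw [Matrix.mul_assoc]
      _ = (((b.factorial : ℂ) • S2) * G₂).trace := by
            rw [hS2, symOp_mul_symOp, Fintype.card_fin]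
      _ = (b.factorial : ℂ) * (S2 * G₂).trace := by
            rw [Matrix.smul_mul, Matrix.trace_smul, smul_eq_mul]
      _ = (b.factorial : ℂ) * (G₂ * S2).trace := by rw [Matrix.trace_mul_comm]
  have htrA_nonneg : 0 ≤ (L * Lᴴ).trace := by
    apply Finset.sum_nonneg
    intro i _
    show (0 : ℂ) ≤ (L * Lᴴ) i i
    rw [Matrix.mul_apply]
    apply Finset.sum_nonneg
    intro m _
    rw [Matrix.conjTranspose_apply]
    exact mul_star_self_nonneg _
  have htrB_nonneg : 0 ≤ (M * Mᴴ).trace := by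
    apply Finset.sum_nonneg
    intro i _
    show (0 : ℂ) ≤ (M * Mᴴ) i i
    rw [Matrix.mul_apply]
    apply Finset.sum_nonneg
    intro m _
    rw [Matrix.conjTranspose_apply]
    exact mul_star_self_nonneg _
  -- nonnegativity of every term
  have hterm : ∀ π : Equiv.Perm (Fin (a + b)),
      0 ≤ (tens (L * Lᴴ) (M * Mᴴ) * permMatrix d π).trace := by
    intro π
    rw [trace_mul_permMatrix]
    set ρ : (Fin a ⊕ Fin b) ≃ (Fin a ⊕ Fin b) :=
      finSumFinEquiv.trans (((π⁻¹ : Equiv.Perm (Fin (a + b))) :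
        Fin (a + b) ≃ Fin (a + b)).trans finSumFinEquiv.symm) with hρ
    have hbij : Function.Bijective (fun (j : Fin (a + b) → Fin d) =>
        (fun q => j (π (finSumFinEquiv q)) : Fin a ⊕ Fin b → Fin d)) := by
      constructor
      · intro j j' h
        funext p
        have := congrFun h (finSumFinEquiv.symm ((π⁻¹ : Equiv.Perm (Fin (a + b))) p))
        simpa using this
      · intro i
        refine ⟨fun p => i (finSumFinEquiv.symm ((π⁻¹ : Equiv.Perm (Fin (a + b))) p)), ?_⟩
        funext q
        simp
    have hre := Fintype.sum_bijective _ hbij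
      (fun j => tens (L * Lᴴ) (M * Mᴴ) (j ∘ ⇑π) j)
      (fun i => (L * Lᴴ) (i ∘ Sum.inl) (i ∘ ⇑ρ ∘ Sum.inl) *
        (M * Mᴴ) (i ∘ Sum.inr) (i ∘ ⇑ρ ∘ Sum.inr)) ?_
    · rw [hre]
      exact key_nonneg ρ L M hL hM
    · intro j
      have f1 : ((fun q : Fin a ⊕ Fin b => j (π (finSumFinEquiv q))) ∘ Sum.inl)
          = (fun t => (j ∘ ⇑π) (Fin.castAdd b t)) := by
        funext t; simp [Function.comp]
      have f2 : ((fun q : Fin a ⊕ Fin b => j (π (finSumFinEquiv q))) ∘ ⇑ρ ∘ Sum.inl)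
          = (fun t => j (Fin.castAdd b t)) := by
        funext t; simp [hρ, Function.comp]
      have f3 : ((fun q : Fin a ⊕ Fin b => j (π (finSumFinEquiv q))) ∘ Sum.inr)
          = (fun t => (j ∘ ⇑π) (Fin.natAdd a t)) := by
        funext t; simp [Function.comp]
      have f4 : ((fun q : Fin a ⊕ Fin b => j (π (finSumFinEquiv q))) ∘ ⇑ρ ∘ Sum.inr)
          = (fun t => j (Fin.natAdd a t)) := by
        funext t; simp [hρ, Function.comp]
      show (L * Lᴴ) (fun t => (j ∘ ⇑π) (Fin.castAdd b t)) (fun t => j (Fin.castAdd b t)) *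
          (M * Mᴴ) (fun t => (j ∘ ⇑π) (Fin.natAdd a t)) (fun t => j (Fin.natAdd a t))
        = (L * Lᴴ) ((fun q : Fin a ⊕ Fin b => j (π (finSumFinEquiv q))) ∘ Sum.inl)
            ((fun q : Fin a ⊕ Fin b => j (π (finSumFinEquiv q))) ∘ ⇑ρ ∘ Sum.inl) *
          (M * Mᴴ) ((fun q : Fin a ⊕ Fin b => j (π (finSumFinEquiv q))) ∘ Sum.inr)
            ((fun q : Fin a ⊕ Fin b => j (π (finSumFinEquiv q))) ∘ ⇑ρ ∘ Sum.inr)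
      rw [f1, f2, f3, f4]
  -- value on the embedded subgroup
  have hemb : ∀ (σ : Equiv.Perm (Fin a)) (τ : Equiv.Perm (Fin b)),
      (tens (L * Lᴴ) (M * Mᴴ) * permMatrix d (embPerm σ τ)).trace =
        (L * Lᴴ).trace * (M * Mᴴ).trace := by
    intro σ τ
    rw [trace_mul_permMatrix]
    have hAsym : ∀ (r c : Fin a → Fin d), (L * Lᴴ) (r ∘ σ) c = (L * Lᴴ) r c := by
      intro r c
      rw [Matrix.mul_apply, Matrix.mul_apply]
      exact Finset.sum_congr rfl fun m _ => by rw [hL]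
    have hBsym : ∀ (r c : Fin b → Fin d), (M * Mᴴ) (r ∘ τ) c = (M * Mᴴ) r c := by
      intro r c
      rw [Matrix.mul_apply, Matrix.mul_apply]
      exact Finset.sum_congr rfl fun m _ => by rw [hM]
    have hstep : ∀ j : Fin (a + b) → Fin d,
        tens (L * Lᴴ) (M * Mᴴ) (j ∘ ⇑(embPerm σ τ)) j = tens (L * Lᴴ) (M * Mᴴ) j j := by
      intro j
      show (L * Lᴴ) _ _ * (M * Mᴴ) _ _ = (L * Lᴴ) _ _ * (M * Mᴴ) _ _
      have h1 : (fun t => (j ∘ ⇑(embPerm σ τ)) (Fin.castAdd b t)) =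
          (fun t => j (Fin.castAdd b t)) ∘ ⇑σ := by
        funext t
        show j (embPerm σ τ (Fin.castAdd b t)) = j (Fin.castAdd b (σ t))
        rw [embPerm_castAdd]
      have h2 : (fun t => (j ∘ ⇑(embPerm σ τ)) (Fin.natAdd a t)) =
          (fun t => j (Fin.natAdd a t)) ∘ ⇑τ := by
        funext t
        show j (embPerm σ τ (Fin.natAdd a t)) = j (Fin.natAdd a (τ t))
        rw [embPerm_natAdd]
      rw [h1, h2, hAsym, hBsym]
    calc ∑ j : Fin (a + b) → Fin d, tens (L * Lᴴ) (M * Mᴴ) (j ∘ ⇑(embPerm σ τ)) j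
        = ∑ j : Fin (a + b) → Fin d, tens (L * Lᴴ) (M * Mᴴ) j j :=
          Finset.sum_congr rfl fun j _ => hstep j
      _ = (tens (L * Lᴴ) (M * Mᴴ)).trace := rfl
      _ = (L * Lᴴ).trace * (M * Mᴴ).trace := tens_trace _ _
  -- lower bound for the total sum
  have hmain : ((a.factorial * b.factorial : ℕ) : ℂ) * ((L * Lᴴ).trace * (M * Mᴴ).trace) ≤
      (tens (L * Lᴴ) (M * Mᴴ) * Sab).trace := by
    have hexp : (tens (L * Lᴴ) (M * Mᴴ) * Sab).trace =
        ∑ π : Equiv.Perm (Fin (a + b)), (tens (L * Lᴴ) (M * Mᴴ) * permMatrix d π).trace := by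
      rw [hSab, symOp, Matrix.mul_sum, Matrix.trace_sum]
    rw [hexp]
    have himage : ∑ π ∈ Finset.univ.image
          (fun p : Equiv.Perm (Fin a) × Equiv.Perm (Fin b) => embPerm p.1 p.2),
          (tens (L * Lᴴ) (M * Mᴴ) * permMatrix d π).trace =
        ((a.factorial * b.factorial : ℕ) : ℂ) * ((L * Lᴴ).trace * (M * Mᴴ).trace) := by
      rw [Finset.sum_image (fun p _ q _ h => embPerm_injective h)]
      have : ∀ p : Equiv.Perm (Fin a) × Equiv.Perm (Fin b),
          (tens (L * Lᴴ) (M * Mᴴ) * permMatrix d (embPerm p.1 p.2)).trace =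
            (L * Lᴴ).trace * (M * Mᴴ).trace := fun p => hemb p.1 p.2
      rw [Finset.sum_congr rfl (fun p _ => this p), Finset.sum_const, Finset.card_univ,
        Fintype.card_prod, Fintype.card_perm, Fintype.card_perm, Fintype.card_fin,
        Fintype.card_fin, nsmul_eq_mul]
    rw [← himage]
    exact Finset.sum_le_sum_of_subset_of_nonneg (Finset.subset_univ _)
      (fun π _ _ => hterm π)
  -- the sandwich reduction
  have hred : (tens (L * Lᴴ) (M * Mᴴ) * Sab).trace =
      ((a.factorial * b.factorial : ℕ) : ℂ) ^ 2 * (tens G₁ G₂ * Sab).trace := by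
    have h1 : tens (L * Lᴴ) (M * Mᴴ) = tens S1 S2 * tens G₁ G₂ * tens S1 S2 := by
      rw [hA, hB, tens_mul, tens_mul]
    calc (tens (L * Lᴴ) (M * Mᴴ) * Sab).trace
        = (tens S1 S2 * tens G₁ G₂ * (tens S1 S2 * Sab)).trace := by
          rw [h1, Matrix.mul_assoc]
      _ = (tens S1 S2 * tens G₁ G₂ * (((a.factorial * b.factorial : ℕ) : ℂ) • Sab)).trace := by
          rw [hS1, hS2, hSab, tensS_mul_symOp]
      _ = ((a.factorial * b.factorial : ℕ) : ℂ) * (tens S1 S2 * (tens G₁ G₂ * Sab)).trace := by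
          rw [Matrix.mul_smul, Matrix.trace_smul, smul_eq_mul, Matrix.mul_assoc]
      _ = ((a.factorial * b.factorial : ℕ) : ℂ) * (tens G₁ G₂ * Sab * tens S1 S2).trace := by
          rw [Matrix.trace_mul_comm]
      _ = ((a.factorial * b.factorial : ℕ) : ℂ) * (tens G₁ G₂ * (Sab * tens S1 S2)).trace := by
          rw [Matrix.mul_assoc]
      _ = ((a.factorial * b.factorial : ℕ) : ℂ) *
            (tens G₁ G₂ * (((a.factorial * b.factorial : ℕ) : ℂ) • Sab)).trace := by
          rw [hS1, hS2, hSab, symOp_mul_tensS]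
      _ = ((a.factorial * b.factorial : ℕ) : ℂ) ^ 2 * (tens G₁ G₂ * Sab).trace := by
          rw [Matrix.mul_smul, Matrix.trace_smul, smul_eq_mul]
          ring
  -- put everything together
  set t1 := (G₁ * S1).trace with ht1def
  set t2 := (G₂ * S2).trace with ht2def
  set T := (tens G₁ G₂ * Sab).trace with hTdef
  have hfinal : ((a.factorial * b.factorial : ℕ) : ℂ) *
      ((a.factorial : ℂ) * t1 * ((b.factorial : ℂ) * t2)) ≤
      ((a.factorial * b.factorial : ℕ) : ℂ) ^ 2 * T := by
    rw [← htrA, ← htrB, ← hred]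
    exact hmain
  have ht1 : 0 ≤ t1.re ∧ t1.im = 0 := by
    have h := htrA_nonneg
    rw [htrA] at h
    obtain ⟨h1, h2⟩ := Complex.le_def.mp h
    simp only [Complex.mul_re, Complex.mul_im, Complex.natCast_re, Complex.natCast_im,
      Complex.zero_re, Complex.zero_im, zero_mul, mul_zero, sub_zero, zero_add, zero_sub,
      add_zero] at h1 h2
    have hfa : (0 : ℝ) < (a.factorial : ℝ) := by positivity
    constructor
    · nlinarith
    · have := h2.symm
      nlinarith [this]
  have ht2 : 0 ≤ t2.re ∧ t2.im = 0 := by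
    have h := htrB_nonneg
    rw [htrB] at h
    obtain ⟨h1, h2⟩ := Complex.le_def.mp h
    simp only [Complex.mul_re, Complex.mul_im, Complex.natCast_re, Complex.natCast_im,
      Complex.zero_re, Complex.zero_im, zero_mul, mul_zero, sub_zero, zero_add, zero_sub,
      add_zero] at h1 h2
    have hfb : (0 : ℝ) < (b.factorial : ℝ) := by positivity
    constructor
    · nlinarith
    · nlinarith [h2.symm]
  show t1.re * t2.re ≤ T.re
  obtain ⟨hre, _⟩ := Complex.le_def.mp hfinal
  have hfa : (0 : ℝ) < (a.factorial : ℝ) := by positivity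
  have hfb : (0 : ℝ) < (b.factorial : ℝ) := by positivity
  have hlhs : (((a.factorial * b.factorial : ℕ) : ℂ) *
      ((a.factorial : ℂ) * t1 * ((b.factorial : ℂ) * t2))).re =
      ((a.factorial : ℝ) * (b.factorial : ℝ)) ^ 2 * (t1.re * t2.re) := by
    simp only [Complex.mul_re, Complex.mul_im, Complex.natCast_re, Complex.natCast_im,
      ht1.2, ht2.2]
    push_cast
    ring
  have hrhs : (((a.factorial * b.factorial : ℕ) : ℂ) ^ 2 * T).re =
      ((a.factorial : ℝ) * (b.factorial : ℝ)) ^ 2 * T.re := by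
    have him : (((a.factorial * b.factorial : ℕ) : ℂ) ^ 2).im = 0 := by
      rw [← Nat.cast_pow, Complex.natCast_im]
    have h2 : (((a.factorial * b.factorial : ℕ) : ℂ) ^ 2).re =
        ((a.factorial : ℝ) * (b.factorial : ℝ)) ^ 2 := by
      rw [← Nat.cast_pow, Complex.natCast_re]
      push_cast
      ring
    rw [Complex.mul_re, him, h2]
    ring
  rw [hlhs, hrhs] at hre
  have hpos : (0 : ℝ) < ((a.factorial : ℝ) * (b.factorial : ℝ)) ^ 2 := by positivity
  exact le_of_mul_le_mul_left hre hpos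
end

section
/- Let O be a D-dimensional Hermitian observable with operator norm at most L-bound, and let σ = Σ_{j=1}^J p_j U_j(ψ_1^{⊗a_{j1}}⊗···⊗ψ_m^{⊗a_{jm}}⊗τ_j)U_j†, where ψ_1,...,ψ_m are pure states, U_j fixed unitaries, τ_j fixed states, and (p_j) a probability distribution. Then for each r, the map ψ_r ↦ tr(Oσ) is 2a_r‖O‖_∞-Lipschitz in the Euclidean norm on state vectors (with all other ψ_i fixed), where a_r = Σ_j p_j a_{jr}. -/
open ComplexOrder Matrix

noncomputable def operNorm {n : Type*} [Fintype n] [DecidableEq n]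
    (A : Matrix n n ℂ) : ℝ :=
  ⨆ i, Real.sqrt ((Matrix.isHermitian_conjTranspose_mul_self A).eigenvalues i)

noncomputable def enormC {ι : Type*} [Fintype ι] (v : ι → ℂ) : ℝ :=
  Real.sqrt (∑ i, ‖v i‖ ^ 2)

lemma enorm_nonneg {ι : Type*} [Fintype ι] (v : ι → ℂ) : 0 ≤ enormC v :=
  Real.sqrt_nonneg _

lemma sq_dot {ι : Type*} [Fintype ι] (v : ι → ℂ) :
    star v ⬝ᵥ v = ((∑ i, ‖v i‖ ^ 2 : ℝ) : ℂ) := by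
  simp only [dotProduct, Pi.star_apply, RCLike.star_def]
  push_cast
  refine Finset.sum_congr rfl fun i _ => ?_
  rw [← Complex.ofReal_pow, Complex.sq_norm, ← Complex.mul_conj, mul_comm]

lemma cauchy_schwarz {ι : Type*} [Fintype ι] (x y : ι → ℂ) :
    ‖star x ⬝ᵥ y‖ ≤ enormC x * enormC y := by
  classical
  let x' : EuclideanSpace ℂ ι := (WithLp.equiv 2 _).symm x
  let y' : EuclideanSpace ℂ ι := (WithLp.equiv 2 _).symm y
  have h1 : (inner ℂ x' y' : ℂ) = star x ⬝ᵥ y := by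
    rw [EuclideanSpace.inner_eq_star_dotProduct, dotProduct_comm]; rfl
  have h2 : ‖x'‖ = enormC x := by
    rw [EuclideanSpace.norm_eq]; rfl
  have h3 : ‖y'‖ = enormC y := by
    rw [EuclideanSpace.norm_eq]; rfl
  calc ‖star x ⬝ᵥ y‖ = ‖(inner ℂ x' y' : ℂ)‖ := by rw [h1]
  _ ≤ ‖x'‖ * ‖y'‖ := norm_inner_le_norm x' y'
  _ = enormC x * enormC y := by rw [h2, h3]

lemma unitary_sum_sq {ι : Type*} [Fintype ι] [DecidableEq ι] (W : Matrix ι ι ℂ)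
    (hW : W ∈ Matrix.unitaryGroup ι ℂ) (v : ι → ℂ) :
    ∑ i, ‖(W *ᵥ v) i‖ ^ 2 = ∑ i, ‖v i‖ ^ 2 := by
  have key : star (W *ᵥ v) ⬝ᵥ (W *ᵥ v) = star v ⬝ᵥ v := by
    have h1 : Wᴴ * W = 1 := by
      have := Matrix.mem_unitaryGroup_iff'.mp hW
      rwa [Matrix.star_eq_conjTranspose] at this
    rw [star_mulVec, dotProduct_mulVec, vecMul_vecMul, h1, vecMul_one]
  have := (sq_dot (W *ᵥ v)) ▸ (sq_dot v) ▸ key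
  exact_mod_cast this

lemma herm_apply {ι : Type*} [Fintype ι] [DecidableEq ι] {H : Matrix ι ι ℂ}
    (hH : H.IsHermitian) (u v : ι) :
    H u v = ∑ i, (hH.eigenvectorUnitary : Matrix ι ι ℂ) u i * (hH.eigenvalues i : ℂ) *
      (starRingEnd ℂ) ((hH.eigenvectorUnitary : Matrix ι ι ℂ) v i) := by
  conv_lhs => rw [hH.spectral_theorem]
  simp [Matrix.mul_apply, Matrix.diagonal_apply, Finset.mul_sum, Finset.sum_mul,
    Matrix.star_apply]

lemma operNorm_nonneg {ι : Type*} [Fintype ι] [DecidableEq ι] (A : Matrix ι ι ℂ) :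
    0 ≤ operNorm A :=
  Real.iSup_nonneg fun _ => Real.sqrt_nonneg _

lemma herm_quadratic {ι : Type*} [Fintype ι] [DecidableEq ι] {H : Matrix ι ι ℂ}
    (hH : H.IsHermitian) (y : ι → ℂ) :
    star y ⬝ᵥ (H *ᵥ y) =
      star ((hH.eigenvectorUnitary : Matrix ι ι ℂ)ᴴ *ᵥ y) ⬝ᵥ
        (Matrix.diagonal (fun i => (hH.eigenvalues i : ℂ)) *ᵥ
          ((hH.eigenvectorUnitary : Matrix ι ι ℂ)ᴴ *ᵥ y)) := by
  set V : Matrix ι ι ℂ := (hH.eigenvectorUnitary : Matrix ι ι ℂ) with hV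
  have h2 : H = V * Matrix.diagonal (fun i => (hH.eigenvalues i : ℂ)) * Vᴴ := by
    have := hH.spectral_theorem
    rw [Unitary.conjStarAlgAut_apply] at this
    rwa [Matrix.star_eq_conjTranspose] at this
  conv_lhs => rw [h2]
  rw [← Matrix.mulVec_mulVec, ← Matrix.mulVec_mulVec, dotProduct_mulVec]
  congr 1
  rw [star_mulVec, Matrix.conjTranspose_conjTranspose]

lemma sum_sq_mulVec {ι : Type*} [Fintype ι] [DecidableEq ι] (A : Matrix ι ι ℂ) (y : ι → ℂ) :
    ∑ u, ‖(A *ᵥ y) u‖ ^ 2 =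
      ∑ i, (Matrix.isHermitian_conjTranspose_mul_self A).eigenvalues i *
        ‖(((Matrix.isHermitian_conjTranspose_mul_self A).eigenvectorUnitary :
          Matrix ι ι ℂ)ᴴ *ᵥ y) i‖ ^ 2 := by
  set hH := Matrix.isHermitian_conjTranspose_mul_self A
  set c : ι → ℂ := (hH.eigenvectorUnitary : Matrix ι ι ℂ)ᴴ *ᵥ y with hc
  apply Complex.ofReal_injective
  have h1 : star (A *ᵥ y) ⬝ᵥ (A *ᵥ y) = star y ⬝ᵥ ((Aᴴ * A) *ᵥ y) := by
    rw [star_mulVec, dotProduct_mulVec, vecMul_vecMul, ← dotProduct_mulVec]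
  have step1 : ((∑ u, ‖(A *ᵥ y) u‖ ^ 2 : ℝ) : ℂ)
      = star c ⬝ᵥ (Matrix.diagonal (fun i => (hH.eigenvalues i : ℂ)) *ᵥ c) := by
    rw [← sq_dot, h1, herm_quadratic hH]
  rw [step1]
  simp only [dotProduct, Matrix.mulVec_diagonal, Pi.star_apply, Complex.ofReal_sum]
  refine Finset.sum_congr rfl fun i _ => ?_
  push_cast
  rw [← Complex.ofReal_pow, Complex.sq_norm, ← Complex.mul_conj]
  ring_nf
  rw [RCLike.star_def]
  ring

lemma enorm_mulVec_le {ι : Type*} [Fintype ι] [DecidableEq ι] (A : Matrix ι ι ℂ) (y : ι → ℂ) :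
    enormC (A *ᵥ y) ≤ operNorm A * enormC y := by
  set hH := Matrix.isHermitian_conjTranspose_mul_self A with hHdef
  set V : Matrix ι ι ℂ := (hH.eigenvectorUnitary : Matrix ι ι ℂ) with hV
  have hVmem : V ∈ Matrix.unitaryGroup ι ℂ := hH.eigenvectorUnitary.2
  have hVu : Vᴴ ∈ Matrix.unitaryGroup ι ℂ := by
    rw [Matrix.mem_unitaryGroup_iff, Matrix.star_eq_conjTranspose,
      Matrix.conjTranspose_conjTranspose]
    rw [Matrix.mem_unitaryGroup_iff'] at hVmem
    rwa [Matrix.star_eq_conjTranspose] at hVmem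
  set c : ι → ℂ := Vᴴ *ᵥ y with hc
  have hcy : ∑ i, ‖c i‖ ^ 2 = ∑ i, ‖y i‖ ^ 2 :=
    unitary_sum_sq Vᴴ hVu y
  have hbound : ∑ u, ‖(A *ᵥ y) u‖ ^ 2 ≤
      operNorm A ^ 2 * ∑ i, ‖y i‖ ^ 2 := by
    rw [sum_sq_mulVec A y, ← hcy, Finset.mul_sum]
    refine Finset.sum_le_sum fun i _ => ?_
    have hnn : 0 ≤ hH.eigenvalues i :=
      (Matrix.posSemidef_conjTranspose_mul_self A).eigenvalues_nonneg i
    have hle : Real.sqrt (hH.eigenvalues i) ≤ operNorm A := by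
      rw [operNorm]
      exact le_ciSup (f := fun i => Real.sqrt ((Matrix.isHermitian_conjTranspose_mul_self A).eigenvalues i))
        (Set.Finite.bddAbove (Set.finite_range _)) i
    have : hH.eigenvalues i ≤ operNorm A ^ 2 := by
      have := mul_self_le_mul_self (Real.sqrt_nonneg _) hle
      rwa [Real.mul_self_sqrt hnn, ← pow_two] at this
    exact mul_le_mul_of_nonneg_right this (by positivity)
  have h2 : enormC (A *ᵥ y) ≤ Real.sqrt (operNorm A ^ 2 * ∑ i, ‖y i‖ ^ 2) :=
    Real.sqrt_le_sqrt hbound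
  rwa [Real.sqrt_mul (by positivity), Real.sqrt_sq (operNorm_nonneg A)] at h2

lemma dot_opbound {ι : Type*} [Fintype ι] [DecidableEq ι] (A : Matrix ι ι ℂ) (x y : ι → ℂ) :
    ‖star x ⬝ᵥ (A *ᵥ y)‖ ≤ operNorm A * enormC x * enormC y := by
  calc ‖star x ⬝ᵥ (A *ᵥ y)‖ ≤ enormC x * enormC (A *ᵥ y) := cauchy_schwarz _ _
  _ ≤ enormC x * (operNorm A * enormC y) :=
      mul_le_mul_of_nonneg_left (enorm_mulVec_le A y) (enorm_nonneg x)
  _ = operNorm A * enormC x * enormC y := by ring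

lemma trace_herm_eq_sum_eigen {ι : Type*} [Fintype ι] [DecidableEq ι] {H : Matrix ι ι ℂ}
    (hH : H.IsHermitian) : H.trace = ∑ i, (hH.eigenvalues i : ℂ) := by
  have h2 : H = (hH.eigenvectorUnitary : Matrix ι ι ℂ) *
      Matrix.diagonal (fun i => (hH.eigenvalues i : ℂ)) *
      (hH.eigenvectorUnitary : Matrix ι ι ℂ)ᴴ := by
    have := hH.spectral_theorem
    rw [Unitary.conjStarAlgAut_apply] at this
    rwa [Matrix.star_eq_conjTranspose] at this
  have hVmem := hH.eigenvectorUnitary.2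
  rw [Matrix.mem_unitaryGroup_iff'] at hVmem
  conv_lhs => rw [h2]
  rw [Matrix.trace_mul_cycle, ← Matrix.star_eq_conjTranspose, hVmem,
    Matrix.one_mul, Matrix.trace_diagonal]

lemma col_sum_sq {ι : Type*} [Fintype ι] [DecidableEq ι] (W : Matrix ι ι ℂ)
    (hW : W ∈ Matrix.unitaryGroup ι ℂ) (i : ι) :
    ∑ u, ‖W u i‖ ^ 2 = 1 := by
  have h := Matrix.mem_unitaryGroup_iff'.mp hW
  have h2 : (star W * W) i i = 1 := by rw [h]; simp
  have h3 : ((∑ u, ‖W u i‖ ^ 2 : ℝ) : ℂ) = (star W * W) i i := by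
    rw [← sq_dot]
    simp [Matrix.mul_apply, Matrix.star_apply, dotProduct]
  rw [h2] at h3
  exact_mod_cast h3

lemma trace_outer {DD : Type*} [Fintype DD] [DecidableEq DD] (O U : Matrix DD DD ℂ)
    (a b : DD → ℂ) :
    (O * (U * Matrix.vecMulVec a (star b) * Uᴴ)).trace =
      star (U *ᵥ b) ⬝ᵥ (O *ᵥ (U *ᵥ a)) := by
  simp only [Matrix.trace, Matrix.diag_apply, Matrix.mul_apply, Matrix.vecMulVec_apply,
    dotProduct, Matrix.mulVec, Matrix.conjTranspose_apply, Pi.star_apply,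
    Finset.mul_sum, Finset.sum_mul, star_sum, star_mul']
  refine Finset.sum_congr rfl fun x _ => ?_
  refine Finset.sum_congr rfl fun y _ => ?_
  rw [Finset.sum_comm]
  refine Finset.sum_congr rfl fun v _ => ?_
  refine Finset.sum_congr rfl fun u _ => ?_
  ring

lemma enorm_unitary {ι : Type*} [Fintype ι] [DecidableEq ι] {U : Matrix ι ι ℂ}
    (hU : U ∈ Matrix.unitaryGroup ι ℂ) (v : ι → ℂ) : enormC (U *ᵥ v) = enormC v := by
  unfold enormC
  rw [unitary_sum_sq U hU v]

lemma M_decomp {K N DD : Type*} [Fintype K] [Fintype N] [DecidableEq N] [Fintype DD]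
    (e : DD ≃ K × N) (τ : Matrix N N ℂ) (hτ : τ.IsHermitian) (w z : K → ℂ) :
    (Matrix.of fun x y => w ((e x).1) * (starRingEnd ℂ) (z ((e y).1)) * τ (e x).2 (e y).2) =
      ∑ i, (hτ.eigenvalues i : ℂ) • Matrix.vecMulVec
        (fun x => w ((e x).1) * (hτ.eigenvectorUnitary : Matrix N N ℂ) (e x).2 i)
        (star fun y => z ((e y).1) * (hτ.eigenvectorUnitary : Matrix N N ℂ) (e y).2 i) := by
  ext x y
  rw [Matrix.of_apply, herm_apply hτ]
  simp only [Matrix.sum_apply, Matrix.smul_apply, Matrix.vecMulVec_apply, Pi.star_apply,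
    Finset.mul_sum, star_mul', smul_eq_mul]
  refine Finset.sum_congr rfl fun i _ => ?_
  simp only [RCLike.star_def]
  ring

lemma sum_sq_split {K N : Type*} [Fintype K] [Fintype N] {DD : Type*} [Fintype DD]
    (e : DD ≃ K × N) (w : K → ℂ) (v : N → ℂ) :
    ∑ x : DD, ‖w ((e x).1) * v ((e x).2)‖ ^ 2 =
      (∑ k, ‖w k‖ ^ 2) * (∑ b, ‖v b‖ ^ 2) := by
  have h1 : ∑ x : DD, ‖w ((e x).1) * v ((e x).2)‖ ^ 2
      = ∑ q : K × N, ‖w q.1 * v q.2‖ ^ 2 :=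
    Equiv.sum_comp e (fun q : K × N => ‖w q.1 * v q.2‖ ^ 2)
  rw [h1, Fintype.sum_prod_type, Finset.sum_mul_sum]
  exact Finset.sum_congr rfl fun k _ => Finset.sum_congr rfl fun b _ => by
    rw [norm_mul, mul_pow]

lemma G_bound {K N DD : Type*} [Fintype K] [Fintype N] [DecidableEq N] [Fintype DD]
    [DecidableEq DD]
    (e : DD ≃ K × N) (O U : Matrix DD DD ℂ) (hU : U ∈ Matrix.unitaryGroup DD ℂ)
    (τ : Matrix N N ℂ) (hτ : τ.PosSemidef) (hτ1 : τ.trace = 1) (w z : K → ℂ) :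
    ‖(O * (U * (Matrix.of fun x y =>
        w ((e x).1) * (starRingEnd ℂ) (z ((e y).1)) * τ (e x).2 (e y).2) * Uᴴ)).trace‖
      ≤ operNorm O * enormC w * enormC z := by
  set V : Matrix N N ℂ := (hτ.1.eigenvectorUnitary : Matrix N N ℂ) with hV
  set μ : N → ℝ := hτ.1.eigenvalues with hμ
  set η : N → DD → ℂ := fun i x => w ((e x).1) * V (e x).2 i with hη
  set ζ : N → DD → ℂ := fun i y => z ((e y).1) * V (e y).2 i with hζ
  have hdec := M_decomp e τ hτ.1 w z
  rw [hdec]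
  have hdist : (O * (U * (∑ i, (μ i : ℂ) • Matrix.vecMulVec (η i) (star (ζ i))) * Uᴴ)).trace
      = ∑ i, (μ i : ℂ) * (star (U *ᵥ ζ i) ⬝ᵥ (O *ᵥ (U *ᵥ η i))) := by
    rw [Matrix.mul_sum, Matrix.sum_mul, Matrix.mul_sum, Matrix.trace_sum]
    refine Finset.sum_congr rfl fun i _ => ?_
    rw [Matrix.mul_smul, Matrix.smul_mul, Matrix.mul_smul, Matrix.trace_smul, smul_eq_mul,
      trace_outer O U (η i) (ζ i)]
  rw [hdist]
  have hμnn : ∀ i, 0 ≤ μ i := hτ.eigenvalues_nonneg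
  have hμ1 : ∑ i, μ i = 1 := by
    have h := trace_herm_eq_sum_eigen hτ.1
    rw [hτ1] at h
    exact_mod_cast h.symm
  have hVcol : ∀ i, ∑ b, ‖V b i‖ ^ 2 = 1 :=
    col_sum_sq V hτ.1.eigenvectorUnitary.2
  have hterm : ∀ i, ‖star (U *ᵥ ζ i) ⬝ᵥ (O *ᵥ (U *ᵥ η i))‖
      ≤ operNorm O * enormC w * enormC z := by
    intro i
    have h1 := dot_opbound O (U *ᵥ ζ i) (U *ᵥ η i)
    rw [enorm_unitary hU, enorm_unitary hU] at h1
    have hηn : enormC (η i) = enormC w := by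
      unfold enormC
      have hs := sum_sq_split e w (fun b => V b i)
      rw [hs, hVcol i, mul_one]
    have hζn : enormC (ζ i) = enormC z := by
      unfold enormC
      have hs := sum_sq_split e z (fun b => V b i)
      rw [hs, hVcol i, mul_one]
    rw [hηn, hζn] at h1
    calc ‖star (U *ᵥ ζ i) ⬝ᵥ (O *ᵥ (U *ᵥ η i))‖
        ≤ operNorm O * enormC z * enormC w := h1
      _ = operNorm O * enormC w * enormC z := by ring
  calc ‖∑ i, (μ i : ℂ) * (star (U *ᵥ ζ i) ⬝ᵥ (O *ᵥ (U *ᵥ η i)))‖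
      ≤ ∑ i, ‖(μ i : ℂ) * (star (U *ᵥ ζ i) ⬝ᵥ (O *ᵥ (U *ᵥ η i)))‖ := by
        exact norm_sum_le _ _
    _ ≤ ∑ i, μ i * (operNorm O * enormC w * enormC z) := by
        refine Finset.sum_le_sum fun i _ => ?_
        rw [norm_mul, Complex.norm_real, Real.norm_eq_abs, abs_of_nonneg (hμnn i)]
        exact mul_le_mul_of_nonneg_left (hterm i) (hμnn i)
    _ = operNorm O * enormC w * enormC z := by
        rw [← Finset.sum_mul, hμ1, one_mul]

noncomputable def Tfun {K N DD : Type*} [Fintype K] [Fintype N] [Fintype DD] [DecidableEq DD]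
    (e : DD ≃ K × N) (O U : Matrix DD DD ℂ) (τ : Matrix N N ℂ) (w z : K → ℂ) : ℂ :=
  (O * (U * (Matrix.of fun x y =>
      w ((e x).1) * (starRingEnd ℂ) (z ((e y).1)) * τ (e x).2 (e y).2) * Uᴴ)).trace

lemma Tfun_sub_left {K N DD : Type*} [Fintype K] [Fintype N] [Fintype DD] [DecidableEq DD]
    (e : DD ≃ K × N) (O U : Matrix DD DD ℂ) (τ : Matrix N N ℂ) (w w' z : K → ℂ) :
    Tfun e O U τ w z - Tfun e O U τ w' z = Tfun e O U τ (w - w') z := by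
  unfold Tfun
  rw [← Matrix.trace_sub, ← Matrix.mul_sub O, ← Matrix.sub_mul, ← Matrix.mul_sub U]
  have hM : ((Matrix.of fun x y =>
        w ((e x).1) * (starRingEnd ℂ) (z ((e y).1)) * τ (e x).2 (e y).2)
      - Matrix.of fun x y =>
        w' ((e x).1) * (starRingEnd ℂ) (z ((e y).1)) * τ (e x).2 (e y).2)
      = Matrix.of fun x y =>
        (w - w') ((e x).1) * (starRingEnd ℂ) (z ((e y).1)) * τ (e x).2 (e y).2 := by
    ext x y
    simp only [Matrix.sub_apply, Matrix.of_apply, Pi.sub_apply]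
    ring
  rw [hM]

lemma Tfun_sub_right {K N DD : Type*} [Fintype K] [Fintype N] [Fintype DD] [DecidableEq DD]
    (e : DD ≃ K × N) (O U : Matrix DD DD ℂ) (τ : Matrix N N ℂ) (w z z' : K → ℂ) :
    Tfun e O U τ w z - Tfun e O U τ w z' = Tfun e O U τ w (z - z') := by
  unfold Tfun
  rw [← Matrix.trace_sub, ← Matrix.mul_sub O, ← Matrix.sub_mul, ← Matrix.mul_sub U]
  have hM : ((Matrix.of fun x y =>
        w ((e x).1) * (starRingEnd ℂ) (z ((e y).1)) * τ (e x).2 (e y).2)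
      - Matrix.of fun x y =>
        w ((e x).1) * (starRingEnd ℂ) (z' ((e y).1)) * τ (e x).2 (e y).2)
      = Matrix.of fun x y =>
        w ((e x).1) * (starRingEnd ℂ) ((z - z') ((e y).1)) * τ (e x).2 (e y).2 := by
    ext x y
    simp only [Matrix.sub_apply, Matrix.of_apply, Pi.sub_apply, map_sub]
    ring
  rw [hM]

lemma Tfun_split {K N DD : Type*} [Fintype K] [Fintype N] [Fintype DD] [DecidableEq DD]
    (e : DD ≃ K × N) (O U : Matrix DD DD ℂ) (τ : Matrix N N ℂ) (w z : K → ℂ) :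
    Tfun e O U τ w w - Tfun e O U τ z z
      = Tfun e O U τ (w - z) w + Tfun e O U τ z (w - z) := by
  rw [← Tfun_sub_left, ← Tfun_sub_right]
  ring

lemma Tfun_bound {K N DD : Type*} [Fintype K] [Fintype N] [DecidableEq N] [Fintype DD]
    [DecidableEq DD] (e : DD ≃ K × N) (O : Matrix DD DD ℂ) {U : Matrix DD DD ℂ}
    (hU : U ∈ Matrix.unitaryGroup DD ℂ) {τ : Matrix N N ℂ}
    (hτ : τ.PosSemidef) (hτ1 : τ.trace = 1) (w z : K → ℂ) :
    ‖Tfun e O U τ w z‖ ≤ operNorm O * enormC w * enormC z :=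
  G_bound e O U hU τ hτ hτ1 w z

lemma enorm_prod_vec {K : Type*} [Fintype K] [DecidableEq K] {d : ℕ}
    (h : K → Fin d → ℂ) :
    ∑ f : K → Fin d, ‖∏ s, h s (f s)‖ ^ 2
      = ∏ s, ∑ x, ‖h s x‖ ^ 2 := by
  rw [Fintype.prod_sum (fun s x => ‖h s x‖ ^ 2)]
  refine Finset.sum_congr rfl fun f _ => ?_
  rw [Complex.norm_prod, ← Finset.prod_pow]

/-- Let `O` be a `D`-dimensional Hermitian observable and
`σ(χ) = Σ_j p_j U_j (ψ₁^{⊗a_{j1}} ⊗ ⋯ ⊗ ψ_m^{⊗a_{jm}} ⊗ τ_j) U_j†` with `ψ_r` replaced by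
`χ`.  Then `χ ↦ tr(O σ(χ))` is `2 a_r ‖O‖_∞`-Lipschitz in the Euclidean norm on unit
vectors, where `a_r = Σ_j p_j a_{jr}`.  The identification of `ℂ^D` with the tensor-product
space of the `j`-th term is recorded by the equivalence `e j` of index sets. -/
theorem lipschitz_trace_obs_haar_assembled (d m J D : ℕ)
    (a : Fin J → Fin m → ℕ) (n : Fin J → ℕ)
    (p : Fin J → ℝ) (hp : ∀ j, 0 ≤ p j) (hp1 : ∑ j, p j = 1)
    (e : (j : Fin J) → Fin D ≃ ((((r : Fin m) × Fin (a j r)) → Fin d) × Fin (n j)))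
    (τ : (j : Fin J) → Matrix (Fin (n j)) (Fin (n j)) ℂ)
    (hτ : ∀ j, (τ j).PosSemidef) (hτ1 : ∀ j, (τ j).trace = 1)
    (U : Fin J → Matrix (Fin D) (Fin D) ℂ)
    (hU : ∀ j, U j ∈ Matrix.unitaryGroup (Fin D) ℂ)
    (O : Matrix (Fin D) (Fin D) ℂ) (hO : O.IsHermitian)
    (ψ : Fin m → Fin d → ℂ) (hψ : ∀ i, ∑ x, ‖ψ i x‖ ^ 2 = 1)
    (r : Fin m) (φ φ' : Fin d → ℂ)
    (hφ : ∑ x, ‖φ x‖ ^ 2 = 1) (hφ' : ∑ x, ‖φ' x‖ ^ 2 = 1) :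
    letI σ : (Fin d → ℂ) → Matrix (Fin D) (Fin D) ℂ := fun χ =>
      ∑ j, (p j : ℂ) •
        (U j *
          (Matrix.of fun x y =>
            (∏ s : (r' : Fin m) × Fin (a j r'),
              (Function.update ψ r χ) s.1 ((e j x).1 s) *
                (starRingEnd ℂ) ((Function.update ψ r χ) s.1 ((e j y).1 s))) *
            τ j (e j x).2 (e j y).2) *
          (U j)ᴴ)
    ‖(O * σ φ).trace - (O * σ φ').trace‖ ≤
      2 * (∑ j, p j * a j r) * operNorm O *
        Real.sqrt (∑ x, ‖φ x - φ' x‖ ^ 2) := by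
  classical
  set σ : (Fin d → ℂ) → Matrix (Fin D) (Fin D) ℂ := fun χ =>
      ∑ j, (p j : ℂ) •
        (U j *
          (Matrix.of fun x y =>
            (∏ s : (r' : Fin m) × Fin (a j r'),
              (Function.update ψ r χ) s.1 ((e j x).1 s) *
                (starRingEnd ℂ) ((Function.update ψ r χ) s.1 ((e j y).1 s))) *
            τ j (e j x).2 (e j y).2) *
          (U j)ᴴ) with hσ
  set ε : ℝ := Real.sqrt (∑ x, ‖φ x - φ' x‖ ^ 2) with hε
  set g : (j : Fin J) → ℕ → ((r' : Fin m) × Fin (a j r')) → Fin d → ℂ :=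
    fun j k s => if s.1 = r then (if (s.2 : ℕ) < k then φ else φ') else ψ s.1 with hg
  set Wv : (j : Fin J) → ℕ → ((((r' : Fin m) × Fin (a j r')) → Fin d) → ℂ) :=
    fun j k f => ∏ s, g j k s (f s) with hWv
  set Vv : (j : Fin J) → (Fin d → ℂ) → ((((r' : Fin m) × Fin (a j r')) → Fin d) → ℂ) :=
    fun j χ f => ∏ s, Function.update ψ r χ s.1 (f s) with hVv
  -- trace formula
  have htr : ∀ χ, (O * σ χ).trace
      = ∑ j, (p j : ℂ) * Tfun (e j) O (U j) (τ j) (Vv j χ) (Vv j χ) := by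
    intro χ
    show (O * ∑ j, (p j : ℂ) • (U j * _ * (U j)ᴴ)).trace = _
    rw [Matrix.mul_sum, Matrix.trace_sum]
    refine Finset.sum_congr rfl fun j _ => ?_
    rw [Matrix.mul_smul, Matrix.trace_smul, smul_eq_mul]
    refine congrArg (fun t => (p j : ℂ) * t) ?_
    unfold Tfun
    have hMM : (Matrix.of fun x y =>
        (∏ s : (r' : Fin m) × Fin (a j r'),
          Function.update ψ r χ s.1 ((e j x).1 s) *
            (starRingEnd ℂ) (Function.update ψ r χ s.1 ((e j y).1 s))) *
        τ j (e j x).2 (e j y).2)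
      = Matrix.of fun x y =>
          Vv j χ ((e j x).1) * (starRingEnd ℂ) (Vv j χ ((e j y).1)) *
            τ j (e j x).2 (e j y).2 := by
      ext x y
      simp only [Matrix.of_apply, hVv]
      rw [Finset.prod_mul_distrib, map_prod]
    rw [hMM]
  have hdiff : (O * σ φ).trace - (O * σ φ').trace
      = ∑ j, (p j : ℂ) * (Tfun (e j) O (U j) (τ j) (Vv j φ) (Vv j φ)
          - Tfun (e j) O (U j) (τ j) (Vv j φ') (Vv j φ')) := by
    rw [htr, htr, ← Finset.sum_sub_distrib]
    exact Finset.sum_congr rfl fun j _ => (mul_sub _ _ _).symm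
  -- unit norms of the hybrid vectors
  have hgnorm : ∀ j k s, ∑ x, ‖g j k s x‖ ^ 2 = 1 := by
    intro j k s
    by_cases h1 : s.1 = r
    · by_cases h2 : (s.2 : ℕ) < k
      · simp only [hg, h1, if_true, h2]
        exact hφ
      · simp only [hg, h1, if_true, h2, if_false]
        exact hφ'
    · simp only [hg, h1, if_false]
      exact hψ s.1
  have hWnorm : ∀ j k, enormC (Wv j k) = 1 := by
    intro j k
    unfold enormC
    rw [hWv]
    rw [enorm_prod_vec (g j k)]
    rw [Finset.prod_congr rfl fun s _ => hgnorm j k s, Finset.prod_const_one, Real.sqrt_one]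
  -- endpoints
  have hVφ : ∀ j, Vv j φ = Wv j (a j r) := by
    intro j
    funext f
    refine Finset.prod_congr rfl fun s _ => ?_
    rw [Function.update_apply]
    obtain ⟨s1, s2⟩ := s
    simp only [hg]
    by_cases h1 : s1 = r
    · subst h1
      simp [s2.isLt]
    · simp [h1]
  have hVφ' : ∀ j, Vv j φ' = Wv j 0 := by
    intro j
    funext f
    refine Finset.prod_congr rfl fun s _ => ?_
    rw [Function.update_apply]
    obtain ⟨s1, s2⟩ := s
    simp only [hg]
    by_cases h1 : s1 = r
    · subst h1
      simp
    · simp [h1]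
  -- one telescoping step
  have hstep : ∀ (j : Fin J) (k : ℕ), k < a j r →
      ‖Tfun (e j) O (U j) (τ j) (Wv j (k + 1)) (Wv j (k + 1))
        - Tfun (e j) O (U j) (τ j) (Wv j k) (Wv j k)‖
      ≤ 2 * (operNorm O * ε) := by
    intro j k hk
    set s₀ : (r' : Fin m) × Fin (a j r') := ⟨r, ⟨k, hk⟩⟩ with hs₀
    set δ : ((r' : Fin m) × Fin (a j r')) → Fin d → ℂ :=
      fun s => if s = s₀ then (fun x => φ x - φ' x) else g j k s with hδdef
    have herase : ∀ s ∈ Finset.univ.erase s₀, ∀ x, g j (k + 1) s x = g j k s x := by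
      intro s hs x
      have hne : s ≠ s₀ := Finset.ne_of_mem_erase hs
      obtain ⟨s1, s2⟩ := s
      by_cases h1 : s1 = r
      · subst h1
        have h2 : (s2 : ℕ) ≠ k := by
          intro hc
          exact hne (by
            rw [hs₀]
            exact congrArg (fun t : Fin (a j s1) =>
              (⟨s1, t⟩ : (r' : Fin m) × Fin (a j r'))) (Fin.ext hc))
        have hlt : ((s2 : ℕ) < k + 1) = ((s2 : ℕ) < k) := by
          apply propext
          omega
        simp only [hg, hlt]
      · simp only [hg]
        rw [if_neg h1, if_neg h1]
    have hsub : Wv j (k + 1) - Wv j k = fun f => ∏ s, δ s (f s) := by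
      funext f
      simp only [Pi.sub_apply, hWv]
      rw [← Finset.mul_prod_erase Finset.univ (fun s => g j (k + 1) s (f s))
          (Finset.mem_univ s₀),
        ← Finset.mul_prod_erase Finset.univ (fun s => g j k s (f s)) (Finset.mem_univ s₀),
        ← Finset.mul_prod_erase Finset.univ (fun s => δ s (f s)) (Finset.mem_univ s₀)]
      have e1 : ∏ s ∈ Finset.univ.erase s₀, g j (k + 1) s (f s)
          = ∏ s ∈ Finset.univ.erase s₀, g j k s (f s) :=
        Finset.prod_congr rfl fun s hs => herase s hs (f s)
      have e2 : ∏ s ∈ Finset.univ.erase s₀, δ s (f s)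
          = ∏ s ∈ Finset.univ.erase s₀, g j k s (f s) :=
        Finset.prod_congr rfl fun s hs => by
          simp only [hδdef, if_neg (Finset.ne_of_mem_erase hs)]
      rw [e1, e2, ← sub_mul]
      congr 1
      have hv1 : g j (k + 1) s₀ (f s₀) = φ (f s₀) := by
        simp [hg, hs₀, Nat.lt_succ_self]
      have hv2 : g j k s₀ (f s₀) = φ' (f s₀) := by
        simp [hg, hs₀]
      have hv3 : δ s₀ (f s₀) = φ (f s₀) - φ' (f s₀) := by
        simp [hδdef]
      rw [hv1, hv2, hv3]
    have hδnorm : enormC (fun f : ((r' : Fin m) × Fin (a j r')) → Fin d =>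
        ∏ s, δ s (f s)) = ε := by
      unfold enormC
      rw [enorm_prod_vec δ]
      rw [Finset.prod_eq_single s₀ (fun s _ hs => by
          simp only [hδdef, if_neg hs]; exact hgnorm j k s)
        (fun hs => absurd (Finset.mem_univ s₀) hs)]
      simp [hδdef, hε]
    have hsplit := Tfun_split (e j) O (U j) (τ j) (Wv j (k + 1)) (Wv j k)
    rw [hsplit, hsub]
    refine (norm_add_le _ _).trans ?_
    have b1 := Tfun_bound (e j) O (hU j) (hτ j) (hτ1 j) (fun f => ∏ s, δ s (f s)) (Wv j (k + 1))
    have b2 := Tfun_bound (e j) O (hU j) (hτ j) (hτ1 j) (Wv j k) (fun f => ∏ s, δ s (f s))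
    rw [hδnorm, hWnorm j (k + 1)] at b1
    rw [hδnorm, hWnorm j k] at b2
    rw [mul_one] at b1 b2
    have hεrw : operNorm O * ε * 1 = operNorm O * ε := mul_one _
    linarith [b1, b2]
  -- assemble
  rw [hdiff]
  calc ‖∑ j, (p j : ℂ) * (Tfun (e j) O (U j) (τ j) (Vv j φ) (Vv j φ)
          - Tfun (e j) O (U j) (τ j) (Vv j φ') (Vv j φ'))‖
      ≤ ∑ j, ‖(p j : ℂ) * (Tfun (e j) O (U j) (τ j) (Vv j φ) (Vv j φ)
          - Tfun (e j) O (U j) (τ j) (Vv j φ') (Vv j φ'))‖ := norm_sum_le _ _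
    _ ≤ ∑ j, p j * ((a j r : ℝ) * (2 * (operNorm O * ε))) := by
        refine Finset.sum_le_sum fun j _ => ?_
        rw [norm_mul, Complex.norm_real, Real.norm_eq_abs, abs_of_nonneg (hp j)]
        refine mul_le_mul_of_nonneg_left ?_ (hp j)
        rw [hVφ j, hVφ' j]
        have htel : Tfun (e j) O (U j) (τ j) (Wv j (a j r)) (Wv j (a j r))
            - Tfun (e j) O (U j) (τ j) (Wv j 0) (Wv j 0)
            = ∑ k ∈ Finset.range (a j r),
              (Tfun (e j) O (U j) (τ j) (Wv j (k + 1)) (Wv j (k + 1))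
                - Tfun (e j) O (U j) (τ j) (Wv j k) (Wv j k)) :=
          (Finset.sum_range_sub (fun k => Tfun (e j) O (U j) (τ j) (Wv j k) (Wv j k))
            (a j r)).symm
        rw [htel]
        refine (norm_sum_le _ _).trans ?_
        calc ∑ k ∈ Finset.range (a j r),
              ‖Tfun (e j) O (U j) (τ j) (Wv j (k + 1)) (Wv j (k + 1))
                - Tfun (e j) O (U j) (τ j) (Wv j k) (Wv j k)‖
            ≤ ∑ _k ∈ Finset.range (a j r), 2 * (operNorm O * ε) :=
              Finset.sum_le_sum fun k hk => hstep j k (Finset.mem_range.mp hk)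
          _ = (a j r : ℝ) * (2 * (operNorm O * ε)) := by
              rw [Finset.sum_const, Finset.card_range, nsmul_eq_mul]
    _ = 2 * (∑ j, p j * a j r) * operNorm O * ε := by
        have hrw : ∑ j, p j * ((a j r : ℝ) * (2 * (operNorm O * ε)))
            = ∑ j, (p j * (a j r : ℝ)) * (2 * (operNorm O * ε)) :=
          Finset.sum_congr rfl fun j _ => by ring
        rw [hrw, ← Finset.sum_mul]
        ring
end
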